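/- arXiv:1908.08732 — 7 statements merged into one kernel-verified Lean document; each statement's English description precedes it below -/
import Mathlib

section
/- For the classical second-order SBP derivative operator D on N nodes (centered differences in the interior, one-sided at the boundaries) with diagonal mass matrix M = Δx·diag(1/2,1,...,1,1/2), the kernel of D* = M⁻¹ Dᵀ M is spanned by the alternating vector osc with osc^(a) = (-1)^(a+1). -/
open Matrix

/-- The classical second-order SBP derivative operator: central differences in the interior,
one-sided differences at the two boundary nodes. -/
noncomputable def sbp2Deriv (N : ℕ) (Δx : ℝ) : Matrix (Fin N) (Fin N) ℝ :=
  Matrix.of fun i j =>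
    if (i : ℕ) = 0 then
      (if (j : ℕ) = 0 then -1 / Δx else if (j : ℕ) = 1 then 1 / Δx else 0)
    else if (i : ℕ) = N - 1 then
      (if (j : ℕ) = N - 2 then -1 / Δx else if (j : ℕ) = N - 1 then 1 / Δx else 0)
    else
      (if (j : ℕ) + 1 = (i : ℕ) then -1 / (2 * Δx)
       else if (j : ℕ) = (i : ℕ) + 1 then 1 / (2 * Δx) else 0)

/-- The diagonal mass matrix `M = Δx · diag(1/2, 1, ..., 1, 1/2)` of the classical
second-order SBP operator. -/
noncomputable def sbp2Mass (N : ℕ) (Δx : ℝ) : Matrix (Fin N) (Fin N) ℝ :=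
  Matrix.diagonal fun i =>
    if (i : ℕ) = 0 ∨ (i : ℕ) = N - 1 then Δx / 2 else Δx

/-! As `M` is invertible, `M⁻¹ Dᵀ M` has the kernel of `Dᵀ M`. The mass weights turn the entries of
`Dᵀ M` into `±1/2`: `(Dᵀ M x)_j = (x_{j-1} - x_{j+1}) / 2` in the interior, `-(x_0 + x_1) / 2` and
`(x_{N-2} + x_{N-1}) / 2` at the ends. So `Dᵀ M x = 0` says exactly that consecutive entries of `x`
are opposite, i.e. that `x` is a multiple of `osc`. -/

theorem Matrix.ker_mulVecLin_nonsing_inv_mul {m n R : Type*} [Fintype m] [Fintype n]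
    [DecidableEq m] [CommRing R] {M : Matrix m m R} (hM : IsUnit M) (A : Matrix m n R) :
    LinearMap.ker (M⁻¹ * A).mulVecLin = LinearMap.ker A.mulVecLin := by
  ext x
  simp only [LinearMap.mem_ker, mulVecLin_apply, ← mulVec_mulVec]
  exact (mulVec_injective_of_isUnit (isUnit_nonsing_inv_iff.mpr hM)).eq_iff' (mulVec_zero _)

theorem mem_span_neg_one_pow_iff {R : Type*} [CommRing R] {N : ℕ} (x : Fin N → R) :
    x ∈ Submodule.span R {fun i : Fin N => (-1 : R) ^ (i : ℕ)} ↔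
      ∀ i j : Fin N, (j : ℕ) = i + 1 → x j = -x i := by
  rw [Submodule.mem_span_singleton]
  constructor
  · rintro ⟨c, rfl⟩ i j hij
    simp [hij, pow_succ]
  · intro h
    cases N with
    | zero => exact ⟨0, funext fun i => i.elim0⟩
    | succ n =>
      refine ⟨x 0, funext fun i => ?_⟩
      induction i using Fin.induction with
      | zero => simp
      | succ i ih => rw [h i.castSucc i.succ (by simp), ← ih]; simp [pow_succ]

theorem Matrix.transpose_mul_diagonal_mulVec_apply_eq_add {ι R : Type*} [Fintype ι]
    [DecidableEq ι] [CommSemiring R] (D : Matrix ι ι R) (m x : ι → R) {a b : ι} (j : ι)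
    (hab : a ≠ b) (hD : ∀ i, i ≠ a → i ≠ b → D i j = 0) :
    ((Dᵀ * diagonal m) *ᵥ x) j = D a j * m a * x a + D b j * m b * x b := by
  rw [← mulVec_mulVec, mulVec, dotProduct, Fintype.sum_eq_add a b hab]
  · simp only [transpose_apply, mulVec_diagonal, mul_assoc]
  · rintro i ⟨hia, hib⟩
    rw [transpose_apply, hD i hia hib, zero_mul]

section SBP2

variable {N : ℕ} {Δx : ℝ}

theorem sbp2Deriv_apply_eq_zero {i j : Fin N} (hij : i ≠ j) (hij' : (i : ℕ) + 1 ≠ j)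
    (hji : (j : ℕ) + 1 ≠ i) : sbp2Deriv N Δx i j = 0 := by
  have := Fin.val_ne_of_ne hij
  simp only [sbp2Deriv, of_apply]
  split_ifs <;> first | rfl | omega

theorem sbp2Deriv_apply_self_eq_zero {i : Fin N} (hi₀ : (i : ℕ) ≠ 0) (hiN : (i : ℕ) + 1 ≠ N) :
    sbp2Deriv N Δx i i = 0 := by
  simp only [sbp2Deriv, of_apply]
  split_ifs <;> first | rfl | omega

theorem sbp2Deriv_transpose_mul_sbp2Mass_mulVec_first (hΔx : Δx ≠ 0) (x : Fin N → ℝ)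
    {i j : Fin N} (hi : (i : ℕ) = 0) (hj : (j : ℕ) = 1) :
    (((sbp2Deriv N Δx)ᵀ * sbp2Mass N Δx) *ᵥ x) i = -(x i + x j) / 2 := by
  have hij : i ≠ j := Fin.ne_of_val_ne (by omega)
  rw [sbp2Mass, Matrix.transpose_mul_diagonal_mulVec_apply_eq_add _ _ _ i hij fun k hki hkj =>
    sbp2Deriv_apply_eq_zero hki (by omega) (by have := Fin.val_ne_of_ne hkj; omega)]
  have := j.isLt
  simp only [sbp2Deriv, of_apply]
  split_ifs <;> first | omega | (field_simp; ring)

theorem sbp2Deriv_transpose_mul_sbp2Mass_mulVec_interior (hΔx : Δx ≠ 0) (x : Fin N → ℝ)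
    {i j k : Fin N} (hi : (j : ℕ) = i + 1) (hk : (k : ℕ) = j + 1) :
    (((sbp2Deriv N Δx)ᵀ * sbp2Mass N Δx) *ᵥ x) j = (x i - x k) / 2 := by
  have hik : i ≠ k := Fin.ne_of_val_ne (by omega)
  rw [sbp2Mass, Matrix.transpose_mul_diagonal_mulVec_apply_eq_add _ _ _ j hik fun l hli hlk => by
    have := Fin.val_ne_of_ne hli
    have := Fin.val_ne_of_ne hlk
    obtain rfl | hlj := eq_or_ne l j
    · exact sbp2Deriv_apply_self_eq_zero (by omega) (by have := k.isLt; omega)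
    · exact sbp2Deriv_apply_eq_zero hlj (by omega) (by omega)]
  have := k.isLt
  simp only [sbp2Deriv, of_apply]
  split_ifs <;> first | omega | (field_simp; ring)

theorem sbp2Deriv_transpose_mul_sbp2Mass_mulVec_last (hΔx : Δx ≠ 0) (x : Fin N → ℝ)
    {i j : Fin N} (hj : (j : ℕ) = i + 1) (hN : (j : ℕ) + 1 = N) :
    (((sbp2Deriv N Δx)ᵀ * sbp2Mass N Δx) *ᵥ x) j = (x i + x j) / 2 := by
  have hij : i ≠ j := Fin.ne_of_val_ne (by omega)
  rw [sbp2Mass, Matrix.transpose_mul_diagonal_mulVec_apply_eq_add _ _ _ j hij fun k hki hkj =>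
    sbp2Deriv_apply_eq_zero hkj (by have := Fin.val_ne_of_ne hki; omega)
      (by have := k.isLt; omega)]
  simp only [sbp2Deriv, of_apply]
  split_ifs <;> first | omega | field_simp

theorem isUnit_sbp2Mass (hΔx : Δx ≠ 0) : IsUnit (sbp2Mass N Δx) :=
  isUnit_diagonal.mpr <| Pi.isUnit_iff.mpr fun i => isUnit_iff_ne_zero.mpr <| by
    split_ifs <;> simpa

theorem sbp2Deriv_transpose_mul_sbp2Mass_mulVec_eq_zero_iff (hN : 2 ≤ N) (hΔx : Δx ≠ 0)
    (x : Fin N → ℝ) :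
    ((sbp2Deriv N Δx)ᵀ * sbp2Mass N Δx) *ᵥ x = 0 ↔
      ∀ i j : Fin N, (j : ℕ) = i + 1 → x j = -x i := by
  constructor
  · intro h
    suffices ∀ n (hn : n + 1 < N), x ⟨n + 1, hn⟩ = -x ⟨n, by omega⟩ by
      rintro ⟨i, hi⟩ ⟨j, hj⟩ (rfl : j = i + 1)
      exact this i hj
    intro n hn
    induction n with
    | zero =>
      have h₀ := congrFun h ⟨0, by omega⟩
      rw [sbp2Deriv_transpose_mul_sbp2Mass_mulVec_first hΔx x (j := ⟨1, hn⟩) rfl rfl,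
        Pi.zero_apply] at h₀
      linarith
    | succ n ih =>
      have hn₁ := congrFun h ⟨n + 1, by omega⟩
      rw [sbp2Deriv_transpose_mul_sbp2Mass_mulVec_interior hΔx x (i := ⟨n, by omega⟩)
        (k := ⟨n + 2, hn⟩) rfl rfl, Pi.zero_apply] at hn₁
      linarith [ih (by omega)]
  · intro h
    funext j
    rw [Pi.zero_apply]
    by_cases hj₀ : (j : ℕ) = 0
    · rw [sbp2Deriv_transpose_mul_sbp2Mass_mulVec_first hΔx x (j := ⟨1, by omega⟩) hj₀ rfl,
        h j ⟨1, by omega⟩ (by simp [hj₀])]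
      ring
    obtain ⟨i, hi⟩ : ∃ i : Fin N, (j : ℕ) = i + 1 := ⟨⟨j - 1, by omega⟩, by simp only; omega⟩
    by_cases hjN : (j : ℕ) + 1 = N
    · rw [sbp2Deriv_transpose_mul_sbp2Mass_mulVec_last hΔx x hi hjN, h i j hi]
      ring
    · rw [sbp2Deriv_transpose_mul_sbp2Mass_mulVec_interior hΔx x (k := ⟨j + 1, by omega⟩) hi
        rfl]
      linarith [h i j hi, h j ⟨j + 1, by omega⟩ rfl]

end SBP2

/-- For the classical second-order SBP derivative operator `D` on `N` nodes with diagonal mass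
matrix `M = Δx·diag(1/2, 1, ..., 1, 1/2)`, the kernel of `D* = M⁻¹ Dᵀ M` is spanned by the
alternating grid-oscillation vector `osc` with `osc⁽ᵃ⁾ = (-1)^(a+1)`. -/
theorem ker_adjoint_sbp2_eq_span_osc (N : ℕ) (hN : 3 ≤ N) (Δx : ℝ) (hΔx : 0 < Δx) :
    LinearMap.ker ((sbp2Mass N Δx)⁻¹ * (sbp2Deriv N Δx)ᵀ * sbp2Mass N Δx).mulVecLin =
      Submodule.span ℝ {(fun i => (-1 : ℝ) ^ (i : ℕ) : Fin N → ℝ)} := by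
  ext x
  rw [Matrix.mul_assoc, Matrix.ker_mulVecLin_nonsing_inv_mul (isUnit_sbp2Mass hΔx.ne'),
    LinearMap.mem_ker, mulVecLin_apply, sbp2Deriv_transpose_mul_sbp2Mass_mulVec_eq_zero_iff
    (by omega) hΔx.ne', mem_span_neg_one_pow_iff]
end

section
/- The classical second-order SBP derivative operator D on N ≥ 3 nodes is nullspace consistent: its kernel is exactly the span of the constant vector. -/
/-!
The interior central differences only tie together nodes of the same parity, so on their own
they admit the checkerboard mode; the one-sided first row forces `v 1 = v 0` and joins the two
parity classes, hence a kernel vector is constant. Conversely every row sums to zero.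
-/

open Matrix

theorem Fin.sum_ite_val_eq_ite_val_eq_mul {R : Type*} [NonAssocSemiring R] {N a b : ℕ}
    (ha : a < N) (hb : b < N) (hab : a ≠ b) (c d : R) (v : Fin N → R) :
    ∑ j : Fin N, (if (j : ℕ) = a then c else if (j : ℕ) = b then d else 0) * v j =
      c * v ⟨a, ha⟩ + d * v ⟨b, hb⟩ := by
  rw [Fintype.sum_eq_add ⟨a, ha⟩ ⟨b, hb⟩ (by simpa [Fin.ext_iff] using hab)]
  · simp [hab.symm]
  · rintro j ⟨hja, hjb⟩
    simp [Fin.ext_iff.not.mp hja, Fin.ext_iff.not.mp hjb]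

theorem Fin.apply_eq_apply_zero_of_step_two {α : Type*} {N : ℕ} (hN : 1 < N) (v : Fin N → α)
    (h₁ : v ⟨1, hN⟩ = v ⟨0, by omega⟩)
    (h₂ : ∀ k (hk : k + 2 < N), v ⟨k + 2, hk⟩ = v ⟨k, by omega⟩) (i : Fin N) :
    v i = v ⟨0, by omega⟩ := by
  obtain ⟨i, hi⟩ := i
  induction i using Nat.twoStepInduction with
  | zero => rfl
  | one => exact h₁
  | more k ih _ => rw [h₂ k hi, ih]

namespace sbp2Deriv

variable {N : ℕ} (Δx : ℝ) (v : Fin N → ℝ)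

theorem mulVec_first (hN : 1 < N) :
    (sbp2Deriv N Δx *ᵥ v) ⟨0, by omega⟩ = (v ⟨1, hN⟩ - v ⟨0, by omega⟩) / Δx := by
  simp only [mulVec, dotProduct, sbp2Deriv, of_apply, if_true]
  rw [Fin.sum_ite_val_eq_ite_val_eq_mul (by omega) hN zero_ne_one]
  ring

theorem mulVec_last (hN : 2 ≤ N) :
    (sbp2Deriv N Δx *ᵥ v) ⟨N - 1, by omega⟩ =
      (v ⟨N - 1, by omega⟩ - v ⟨N - 2, by omega⟩) / Δx := by
  simp only [mulVec, dotProduct, sbp2Deriv, of_apply, if_true, show N - 1 ≠ 0 by omega,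
    if_false]
  rw [Fin.sum_ite_val_eq_ite_val_eq_mul (by omega) (by omega) (by omega)]
  ring

theorem mulVec_interior {k : ℕ} (hk : k + 2 < N) :
    (sbp2Deriv N Δx *ᵥ v) ⟨k + 1, by omega⟩ =
      (v ⟨k + 2, hk⟩ - v ⟨k, by omega⟩) / (2 * Δx) := by
  simp only [mulVec, dotProduct, sbp2Deriv, of_apply, Nat.add_right_cancel_iff,
    show k + 1 ≠ 0 by omega, show k + 1 ≠ N - 1 by omega, if_false]
  rw [Fin.sum_ite_val_eq_ite_val_eq_mul (by omega) hk (by omega)]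
  ring

theorem mulVec_const (hN : 2 ≤ N) (c : ℝ) : sbp2Deriv N Δx *ᵥ (fun _ => c) = 0 := by
  ext ⟨i, hi⟩
  rcases Nat.eq_zero_or_eq_succ_pred i with rfl | hi₀
  · simp [mulVec_first Δx _ (by omega : 1 < N)]
  obtain rfl | hlast := eq_or_ne i (N - 1)
  · simp [mulVec_last Δx _ hN]
  obtain ⟨k, rfl⟩ : ∃ k, i = k + 1 := ⟨_, hi₀⟩
  simp [mulVec_interior Δx _ (by omega : k + 2 < N)]

theorem apply_eq_apply_zero_of_mulVec_eq_zero (hN : 2 ≤ N) (hΔx : Δx ≠ 0)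
    (hv : sbp2Deriv N Δx *ᵥ v = 0) (i : Fin N) : v i = v ⟨0, by omega⟩ := by
  refine Fin.apply_eq_apply_zero_of_step_two (by omega) v ?_ (fun k hk => ?_) i
  · have h := congrFun hv ⟨0, by omega⟩
    rwa [mulVec_first Δx v (by omega), Pi.zero_apply, div_eq_zero_iff, sub_eq_zero,
      or_iff_left hΔx] at h
  · have h := congrFun hv ⟨k + 1, by omega⟩
    rwa [mulVec_interior Δx v hk, Pi.zero_apply, div_eq_zero_iff, sub_eq_zero,
      or_iff_left (mul_ne_zero two_ne_zero hΔx)] at h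

end sbp2Deriv

/-- The classical second-order SBP derivative operator on `N ≥ 3` nodes is nullspace
consistent: its kernel is exactly the span of the constant vector. -/
theorem sbp2_nullspace_consistent (N : ℕ) (hN : 3 ≤ N) (Δx : ℝ) (hΔx : 0 < Δx) :
    LinearMap.ker (sbp2Deriv N Δx).mulVecLin =
      Submodule.span ℝ {(fun _ => 1 : Fin N → ℝ)} := by
  apply le_antisymm
  · intro v hv
    have hconst := sbp2Deriv.apply_eq_apply_zero_of_mulVec_eq_zero Δx v (by omega) hΔx.ne' hv
    exact Submodule.mem_span_singleton.mpr ⟨v ⟨0, by omega⟩, funext fun i => by simp [hconst i]⟩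
  · rw [Submodule.span_singleton_le_iff_mem, LinearMap.mem_ker]
    exact sbp2Deriv.mulVec_const Δx (by omega) 1
end

section
/- For nullspace consistent tensor product SBP operators in two dimensions, the kernel of the discrete curl is the M-orthogonal direct sum of the image of the discrete gradient and the two-dimensional space spanned by (osc₁, 0) and (0, osc₂), where osc₁ = osc_x ⊗ 𝟙 and osc₂ = 𝟙 ⊗ osc_y. -/
/-!
Write a grid function on `ι × κ` as `vec X` with `X : Matrix κ ι ℝ` (so `X j i = φ (i, j)`).
Then `D₁` and `D₂` become `X ↦ X * Dxᵀ` and `X ↦ Dy * X`, and `(vec U₁, vec U₂)` lies in the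
kernel of the curl iff `Dy * U₁ = U₂ * Dxᵀ`.

In one dimension, `ker Dᵀ` is spanned by `M osc`, so by the Fredholm alternative the range of `D`
is the set of vectors orthogonal to `M osc`. Multiplying the curl condition by `Mx oscx` shows that
the `oscx`-coefficients of the rows of `U₁` form a vector in `ker Dy`, i.e. a constant `c`; hence
`U₁ - a osc₁ = Ψ * Dxᵀ`. Then `(U₂ - Dy * Ψ) * Dxᵀ = 0`, so `U₂ - Dy * Ψ` is constant in `x`,
and splitting its profile as `Dy χ + b oscy` gives the potential `Ψ + replicateCol ι χ`.
Orthogonality is `Dᵀ M osc = 0` in each factor; since `Mx ⊗ My` is positive definite it makes the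
sum direct.
-/

open Matrix Kronecker

theorem Matrix.mem_range_mulVecLin_iff_forall_dotProduct {m n : Type*} [Fintype m] [Fintype n]
    [DecidableEq m] [DecidableEq n] (A : Matrix m n ℝ) (x : m → ℝ) :
    x ∈ LinearMap.range A.mulVecLin ↔ ∀ y, Aᵀ *ᵥ y = 0 → y ⬝ᵥ x = 0 := by
  have h := LinearMap.orthogonal_ker (toEuclideanLin Aᵀ)
  rw [← toEuclideanLin_conjTranspose_eq_adjoint, conjTranspose_eq_transpose_of_trivial,
    transpose_transpose] at h
  have hx : x ∈ LinearMap.range A.mulVecLin ↔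
      WithLp.toLp 2 x ∈ LinearMap.range (toEuclideanLin A) := by
    constructor
    · rintro ⟨v, rfl⟩
      exact ⟨WithLp.toLp 2 v, by simp⟩
    · rintro ⟨v, hv⟩
      exact ⟨v.ofLp, by simpa using congrArg WithLp.ofLp hv⟩
  rw [hx, ← h, Submodule.mem_orthogonal]
  constructor
  · intro H y hy
    simpa [EuclideanSpace.inner_eq_star_dotProduct, dotProduct_comm] using
      H (WithLp.toLp 2 y) (by simpa [toLpLin_apply] using hy)
  · intro H y hy
    simpa [EuclideanSpace.inner_eq_star_dotProduct, dotProduct_comm] using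
      H y.ofLp (by simpa [toLpLin_apply] using hy)

theorem Matrix.PosDef.eq_zero_of_dotProduct_mulVec_self_eq_zero {n : Type*} [Fintype n]
    {M : Matrix n n ℝ} (hM : M.PosDef) {x : n → ℝ} (hx : x ⬝ᵥ M *ᵥ x = 0) : x = 0 := by
  by_contra hne
  simpa [hx] using hM.dotProduct_mulVec_pos hne

theorem disjoint_of_forall_dotProduct_mulVec_eq_zero {n : Type*} [Fintype n]
    {K : Matrix n n ℝ} (hK : K.PosDef) {S T : Submodule ℝ ((n → ℝ) × (n → ℝ))}
    (h : ∀ u ∈ S, ∀ w ∈ T, u.1 ⬝ᵥ K *ᵥ w.1 + u.2 ⬝ᵥ K *ᵥ w.2 = 0) : Disjoint S T := by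
  refine Submodule.disjoint_def.mpr fun x hS hT => ?_
  have hx := h x hS x hT
  have h₁ := hK.posSemidef.dotProduct_mulVec_nonneg x.1
  have h₂ := hK.posSemidef.dotProduct_mulVec_nonneg x.2
  rw [star_trivial] at h₁ h₂
  exact Prod.ext (hK.eq_zero_of_dotProduct_mulVec_self_eq_zero (by linarith))
    (hK.eq_zero_of_dotProduct_mulVec_self_eq_zero (by linarith))

section Factor

variable {ι κ : Type*} [Fintype ι] [DecidableEq ι] {D M : Matrix ι ι ℝ} {osc : ι → ℝ}

omit [DecidableEq ι] in
theorem mulVec_one_eq_zero (hD : LinearMap.ker D.mulVecLin = Submodule.span ℝ {1}) :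
    D *ᵥ 1 = 0 :=
  LinearMap.mem_ker.mp (hD ▸ Submodule.mem_span_singleton_self 1)

theorem ker_transpose_eq_span_mulVec (hM : IsUnit M)
    (hosc : LinearMap.ker (M⁻¹ * Dᵀ * M).mulVecLin = Submodule.span ℝ {osc}) :
    LinearMap.ker Dᵀ.mulVecLin = Submodule.span ℝ {M *ᵥ osc} := by
  have hinv : LinearMap.ker M⁻¹.mulVecLin = ⊥ :=
    LinearMap.ker_eq_bot.mpr (mulVec_injective_iff_isUnit.mpr (isUnit_nonsing_inv_iff.mpr hM))
  rw [mulVecLin_mul, mulVecLin_mul, LinearMap.ker_comp, LinearMap.ker_comp_of_ker_eq_bot _ hinv]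
    at hosc
  rw [← Submodule.map_comap_eq_of_surjective (f := M.mulVecLin)
    (mulVec_surjective_iff_isUnit.mpr hM) (LinearMap.ker Dᵀ.mulVecLin), hosc,
    Submodule.map_span, Set.image_singleton, mulVecLin_apply]

theorem transpose_mulVec_mulVec_eq_zero (hM : IsUnit M)
    (hosc : LinearMap.ker (M⁻¹ * Dᵀ * M).mulVecLin = Submodule.span ℝ {osc}) :
    Dᵀ *ᵥ (M *ᵥ osc) = 0 :=
  LinearMap.mem_ker.mp (ker_transpose_eq_span_mulVec hM hosc ▸ Submodule.mem_span_singleton_self _)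

theorem mem_range_iff_dotProduct_mulVec_eq_zero (hM : IsUnit M)
    (hosc : LinearMap.ker (M⁻¹ * Dᵀ * M).mulVecLin = Submodule.span ℝ {osc}) (x : ι → ℝ) :
    x ∈ LinearMap.range D.mulVecLin ↔ (M *ᵥ osc) ⬝ᵥ x = 0 := by
  rw [mem_range_mulVecLin_iff_forall_dotProduct]
  refine ⟨fun h => h _ (transpose_mulVec_mulVec_eq_zero hM hosc), fun h y hy => ?_⟩
  have hy' : y ∈ Submodule.span ℝ {M *ᵥ osc} := ker_transpose_eq_span_mulVec hM hosc ▸ hy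
  obtain ⟨c, rfl⟩ := Submodule.mem_span_singleton.mp hy'
  rw [smul_dotProduct, h, smul_zero]

theorem exists_eq_mulVec_add_smul (hM : M.PosDef)
    (hosc : LinearMap.ker (M⁻¹ * Dᵀ * M).mulVecLin = Submodule.span ℝ {osc}) (x : ι → ℝ) :
    ∃ (y : ι → ℝ) (b : ℝ), x = D *ᵥ y + b • osc := by
  rcases eq_or_ne osc 0 with h0 | h0
  · obtain ⟨y, hy⟩ := (mem_range_iff_dotProduct_mulVec_eq_zero hM.isUnit hosc x).mpr
      (by simp [h0])
    exact ⟨y, 0, by simp [← hy]⟩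
  · have hq : osc ⬝ᵥ M *ᵥ osc ≠ 0 := fun h => h0 (hM.eq_zero_of_dotProduct_mulVec_self_eq_zero h)
    set b := (M *ᵥ osc) ⬝ᵥ x / (osc ⬝ᵥ M *ᵥ osc)
    obtain ⟨y, hy⟩ := (mem_range_iff_dotProduct_mulVec_eq_zero hM.isUnit hosc (x - b • osc)).mpr
      (by rw [dotProduct_sub, dotProduct_smul, dotProduct_comm _ osc, smul_eq_mul,
        div_mul_cancel₀ _ hq, sub_self])
    exact ⟨y, b, by rw [← mulVecLin_apply, hy, sub_add_cancel]⟩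

theorem exists_eq_mul_transpose_of_mulVec_eq_zero (hM : IsUnit M)
    (hosc : LinearMap.ker (M⁻¹ * Dᵀ * M).mulVecLin = Submodule.span ℝ {osc})
    {U : Matrix κ ι ℝ} (hU : U *ᵥ (M *ᵥ osc) = 0) : ∃ Ψ : Matrix κ ι ℝ, U = Ψ * Dᵀ := by
  have hrow (j : κ) : U j ∈ LinearMap.range D.mulVecLin :=
    (mem_range_iff_dotProduct_mulVec_eq_zero hM hosc _).mpr
      (by rw [dotProduct_comm]; exact congrFun hU j)
  choose Ψ hΨ using hrow
  refine ⟨of Ψ, ?_⟩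
  ext j i
  rw [← hΨ j]
  simp [mul_apply, mulVec, dotProduct, mul_comm]

omit [DecidableEq ι] in
theorem exists_eq_replicateCol_of_mul_transpose_eq_zero
    (hD : LinearMap.ker D.mulVecLin = Submodule.span ℝ {1}) {R : Matrix κ ι ℝ}
    (hR : R * Dᵀ = 0) : ∃ ρ : κ → ℝ, R = replicateCol ι ρ := by
  have hrow (j : κ) : ∃ c : ℝ, c • 1 = R j := by
    refine Submodule.mem_span_singleton.mp (hD ▸ LinearMap.mem_ker.mpr ?_)
    rw [mulVecLin_apply, ← vecMul_transpose]
    exact congrFun hR j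
  choose ρ hρ using hrow
  refine ⟨ρ, ?_⟩
  ext j i
  simp [← hρ j]

omit [DecidableEq ι] in
theorem replicateCol_mul_transpose_eq_zero (hD1 : D *ᵥ 1 = 0) (ρ : κ → ℝ) :
    replicateCol ι ρ * Dᵀ = 0 := by
  rw [← vecMulVec_one, vecMulVec_mul, vecMul_transpose, hD1]
  ext
  simp [vecMulVec_apply]

omit [DecidableEq ι] in
theorem mul_replicateRow_eq_zero (hD1 : D *ᵥ 1 = 0) (v : κ → ℝ) :
    D * replicateRow ι v = 0 := by
  rw [← one_vecMulVec, mul_vecMulVec, hD1, zero_vecMulVec]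

end Factor

section GridFunctions

variable {ι κ : Type*} [Fintype ι] [DecidableEq ι] [Fintype κ] [DecidableEq κ]

def discreteGrad (Dx : Matrix ι ι ℝ) (Dy : Matrix κ κ ℝ) :
    (ι × κ → ℝ) →ₗ[ℝ] (ι × κ → ℝ) × (ι × κ → ℝ) :=
  LinearMap.prod (Dx ⊗ₖ (1 : Matrix κ κ ℝ)).mulVecLin ((1 : Matrix ι ι ℝ) ⊗ₖ Dy).mulVecLin

def discreteCurl (Dx : Matrix ι ι ℝ) (Dy : Matrix κ κ ℝ) :
    (ι × κ → ℝ) × (ι × κ → ℝ) →ₗ[ℝ] (ι × κ → ℝ) :=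
  (Dx ⊗ₖ (1 : Matrix κ κ ℝ)).mulVecLin ∘ₗ LinearMap.snd ℝ _ _ -
    ((1 : Matrix ι ι ℝ) ⊗ₖ Dy).mulVecLin ∘ₗ LinearMap.fst ℝ _ _

def oscSpan (oscx : ι → ℝ) (oscy : κ → ℝ) : Submodule ℝ ((ι × κ → ℝ) × (ι × κ → ℝ)) :=
  Submodule.span ℝ {(fun p => oscx p.1, 0), (0, fun p => oscy p.2)}

omit [DecidableEq ι] in
theorem kronecker_one_mulVec_vec (A : Matrix ι ι ℝ) (X : Matrix κ ι ℝ) :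
    (A ⊗ₖ (1 : Matrix κ κ ℝ)) *ᵥ X.vec = (X * Aᵀ).vec := by
  rw [kronecker_mulVec_vec, Matrix.one_mul]

theorem discreteGrad_vec (Dx : Matrix ι ι ℝ) (Dy : Matrix κ κ ℝ) (X : Matrix κ ι ℝ) :
    discreteGrad Dx Dy X.vec = ((X * Dxᵀ).vec, (Dy * X).vec) := by
  simp [discreteGrad, kronecker_one_mulVec_vec, vec_mul_eq_mulVec]

theorem discreteCurl_vec (Dx : Matrix ι ι ℝ) (Dy : Matrix κ κ ℝ) (U₁ U₂ : Matrix κ ι ℝ) :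
    discreteCurl Dx Dy (U₁.vec, U₂.vec) = (U₂ * Dxᵀ).vec - (Dy * U₁).vec := by
  simp [discreteCurl, kronecker_one_mulVec_vec, vec_mul_eq_mulVec]

end GridFunctions

section KerCurl

variable {ι κ : Type*} [Fintype ι] [DecidableEq ι] [Fintype κ] [DecidableEq κ]
  {Dx Mx : Matrix ι ι ℝ} {Dy My : Matrix κ κ ℝ} {oscx : ι → ℝ} {oscy : κ → ℝ}

theorem exists_eq_mul_transpose_add_and_eq_mul_add (hMx : Mx.PosDef) (hMy : My.PosDef)
    (hDx : LinearMap.ker Dx.mulVecLin = Submodule.span ℝ {1})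
    (hDy : LinearMap.ker Dy.mulVecLin = Submodule.span ℝ {1})
    (hoscx : LinearMap.ker (Mx⁻¹ * Dxᵀ * Mx).mulVecLin = Submodule.span ℝ {oscx})
    (hoscy : LinearMap.ker (My⁻¹ * Dyᵀ * My).mulVecLin = Submodule.span ℝ {oscy})
    {U₁ U₂ : Matrix κ ι ℝ} (hcurl : Dy * U₁ = U₂ * Dxᵀ) :
    ∃ (Φ : Matrix κ ι ℝ) (a b : ℝ),
      U₁ = Φ * Dxᵀ + a • replicateRow κ oscx ∧ U₂ = Dy * Φ + b • replicateCol ι oscy := by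
  obtain ⟨c, hc⟩ : ∃ c : ℝ, c • 1 = U₁ *ᵥ (Mx *ᵥ oscx) := by
    refine Submodule.mem_span_singleton.mp (hDy ▸ LinearMap.mem_ker.mpr ?_)
    rw [mulVecLin_apply, mulVec_mulVec, hcurl, ← mulVec_mulVec,
      transpose_mulVec_mulVec_eq_zero hMx.isUnit hoscx, mulVec_zero]
  obtain ⟨a, ha⟩ : ∃ a : ℝ, (U₁ - a • replicateRow κ oscx) *ᵥ (Mx *ᵥ oscx) = 0 := by
    rcases eq_or_ne oscx 0 with h0 | h0
    · exact ⟨0, by simp [h0]⟩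
    · have hq : oscx ⬝ᵥ Mx *ᵥ oscx ≠ 0 :=
        fun h => h0 (hMx.eq_zero_of_dotProduct_mulVec_self_eq_zero h)
      refine ⟨c / (oscx ⬝ᵥ Mx *ᵥ oscx), ?_⟩
      rw [sub_mulVec, smul_mulVec, replicateRow_mulVec_eq_const, ← hc]
      ext j
      simp [div_mul_cancel₀ c hq]
  obtain ⟨Ψ, hΨ⟩ := exists_eq_mul_transpose_of_mulVec_eq_zero hMx.isUnit hoscx ha
  obtain ⟨ρ, hρ⟩ : ∃ ρ, U₂ - Dy * Ψ = replicateCol ι ρ := by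
    refine exists_eq_replicateCol_of_mul_transpose_eq_zero hDx ?_
    rw [Matrix.sub_mul, Matrix.mul_assoc, ← hΨ, ← hcurl, Matrix.mul_sub, Matrix.mul_smul,
      mul_replicateRow_eq_zero (mulVec_one_eq_zero hDy), smul_zero, sub_zero, sub_self]
  obtain ⟨χ, b, hχ⟩ := exists_eq_mulVec_add_smul hMy hoscy ρ
  refine ⟨Ψ + replicateCol ι χ, a, b, ?_, ?_⟩
  · rw [Matrix.add_mul, replicateCol_mul_transpose_eq_zero (mulVec_one_eq_zero hDx), add_zero,
      ← hΨ, sub_add_cancel]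
  · rw [Matrix.mul_add, ← replicateCol_mulVec, add_assoc, ← replicateCol_smul,
      ← replicateCol_add, ← hχ, ← hρ, add_sub_cancel]

theorem range_discreteGrad_sup_oscSpan_le_ker (hDx : Dx *ᵥ 1 = 0) (hDy : Dy *ᵥ 1 = 0) :
    LinearMap.range (discreteGrad Dx Dy) ⊔ oscSpan oscx oscy ≤
      LinearMap.ker (discreteCurl Dx Dy) := by
  refine sup_le ?_ (Submodule.span_le.mpr ?_)
  · rintro _ ⟨φ, rfl⟩
    obtain ⟨X, rfl⟩ := vec_bijective.surjective φ
    rw [LinearMap.mem_ker, discreteGrad_vec, discreteCurl_vec, Matrix.mul_assoc, sub_self]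
  · rintro w (rfl | rfl)
    · show discreteCurl Dx Dy ((replicateRow κ oscx).vec, (0 : Matrix κ ι ℝ).vec) = 0
      rw [discreteCurl_vec, Matrix.zero_mul, mul_replicateRow_eq_zero hDy, sub_self]
    · show discreteCurl Dx Dy ((0 : Matrix κ ι ℝ).vec, (replicateCol ι oscy).vec) = 0
      rw [discreteCurl_vec, Matrix.mul_zero, replicateCol_mul_transpose_eq_zero hDx, sub_self]

theorem ker_discreteCurl_le (hMx : Mx.PosDef) (hMy : My.PosDef)
    (hDx : LinearMap.ker Dx.mulVecLin = Submodule.span ℝ {1})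
    (hDy : LinearMap.ker Dy.mulVecLin = Submodule.span ℝ {1})
    (hoscx : LinearMap.ker (Mx⁻¹ * Dxᵀ * Mx).mulVecLin = Submodule.span ℝ {oscx})
    (hoscy : LinearMap.ker (My⁻¹ * Dyᵀ * My).mulVecLin = Submodule.span ℝ {oscy}) :
    LinearMap.ker (discreteCurl Dx Dy) ≤
      LinearMap.range (discreteGrad Dx Dy) ⊔ oscSpan oscx oscy := by
  rintro ⟨u₁, u₂⟩ hu
  obtain ⟨U₁, rfl⟩ := vec_bijective.surjective u₁
  obtain ⟨U₂, rfl⟩ := vec_bijective.surjective u₂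
  rw [LinearMap.mem_ker, discreteCurl_vec, sub_eq_zero, vec_inj] at hu
  obtain ⟨Φ, a, b, rfl, rfl⟩ :=
    exists_eq_mul_transpose_add_and_eq_mul_add hMx hMy hDx hDy hoscx hoscy hu.symm
  refine Submodule.mem_sup.mpr ⟨_, ⟨Φ.vec, rfl⟩, _, Submodule.mem_span_pair.mpr ⟨a, b, rfl⟩, ?_⟩
  rw [discreteGrad_vec]
  ext p <;> simp

theorem kronecker_one_mulVec_dotProduct_kronecker_mulVec_vec_replicateRow (hMx : IsUnit Mx)
    (hoscx : LinearMap.ker (Mx⁻¹ * Dxᵀ * Mx).mulVecLin = Submodule.span ℝ {oscx})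
    (My : Matrix κ κ ℝ) (φ : ι × κ → ℝ) :
    ((Dx ⊗ₖ (1 : Matrix κ κ ℝ)) *ᵥ φ) ⬝ᵥ (Mx ⊗ₖ My) *ᵥ (replicateRow κ oscx).vec = 0 := by
  rw [dotProduct_comm, dotProduct_mulVec, kronecker_mulVec_vec, vec_vecMul_kronecker,
    transpose_one, Matrix.one_mul, Matrix.mul_assoc, Matrix.mul_assoc, ← replicateRow_vecMul,
    ← vecMul_vecMul, vecMul_transpose, ← mulVec_transpose,
    transpose_mulVec_mulVec_eq_zero hMx hoscx, replicateRow_zero, Matrix.mul_zero, vec_zero,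
    zero_dotProduct]

theorem one_kronecker_mulVec_dotProduct_kronecker_mulVec_vec_replicateCol (hMy : IsUnit My)
    (hoscy : LinearMap.ker (My⁻¹ * Dyᵀ * My).mulVecLin = Submodule.span ℝ {oscy})
    (Mx : Matrix ι ι ℝ) (φ : ι × κ → ℝ) :
    (((1 : Matrix ι ι ℝ) ⊗ₖ Dy) *ᵥ φ) ⬝ᵥ (Mx ⊗ₖ My) *ᵥ (replicateCol ι oscy).vec = 0 := by
  rw [dotProduct_comm, dotProduct_mulVec, kronecker_mulVec_vec, vec_vecMul_kronecker,
    Matrix.mul_one, ← Matrix.mul_assoc, ← Matrix.mul_assoc, ← replicateCol_mulVec,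
    ← mulVec_mulVec, transpose_mulVec_mulVec_eq_zero hMy hoscy, replicateCol_zero,
    Matrix.zero_mul, vec_zero, zero_dotProduct]

theorem orthogonal_range_discreteGrad_oscSpan (hMx : IsUnit Mx) (hMy : IsUnit My)
    (hoscx : LinearMap.ker (Mx⁻¹ * Dxᵀ * Mx).mulVecLin = Submodule.span ℝ {oscx})
    (hoscy : LinearMap.ker (My⁻¹ * Dyᵀ * My).mulVecLin = Submodule.span ℝ {oscy}) :
    ∀ u ∈ LinearMap.range (discreteGrad Dx Dy), ∀ w ∈ oscSpan oscx oscy,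
      u.1 ⬝ᵥ (Mx ⊗ₖ My) *ᵥ w.1 + u.2 ⬝ᵥ (Mx ⊗ₖ My) *ᵥ w.2 = 0 := by
  rintro _ ⟨φ, rfl⟩ w hw
  obtain ⟨s, t, rfl⟩ := Submodule.mem_span_pair.mp hw
  rw [show (fun p : ι × κ => oscx p.1) = (replicateRow κ oscx).vec from rfl,
    show (fun p : ι × κ => oscy p.2) = (replicateCol ι oscy).vec from rfl]
  simp [discreteGrad, mulVec_smul,
    kronecker_one_mulVec_dotProduct_kronecker_mulVec_vec_replicateRow hMx hoscx My φ,
    one_kronecker_mulVec_dotProduct_kronecker_mulVec_vec_replicateCol hMy hoscy Mx φ]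

end KerCurl

theorem ker_curl_eq_im_grad_oplus_osc_2D_general (N₁ N₂ : ℕ)
    (Dx Mx : Matrix (Fin N₁) (Fin N₁) ℝ) (Dy My : Matrix (Fin N₂) (Fin N₂) ℝ)
    (hMx : Mx.PosDef) (hMy : My.PosDef)
    (hDx : LinearMap.ker Dx.mulVecLin = Submodule.span ℝ {(fun _ => 1 : Fin N₁ → ℝ)})
    (hDy : LinearMap.ker Dy.mulVecLin = Submodule.span ℝ {(fun _ => 1 : Fin N₂ → ℝ)})
    (oscx : Fin N₁ → ℝ) (oscy : Fin N₂ → ℝ)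
    (hoscx : LinearMap.ker (Mx⁻¹ * Dxᵀ * Mx).mulVecLin = Submodule.span ℝ {oscx})
    (hoscy : LinearMap.ker (My⁻¹ * Dyᵀ * My).mulVecLin = Submodule.span ℝ {oscy})
    (D₁ D₂ : Matrix (Fin N₁ × Fin N₂) (Fin N₁ × Fin N₂) ℝ)
    (hD₁ : D₁ = Dx ⊗ₖ (1 : Matrix (Fin N₂) (Fin N₂) ℝ))
    (hD₂ : D₂ = (1 : Matrix (Fin N₁) (Fin N₁) ℝ) ⊗ₖ Dy)
    (grad : (Fin N₁ × Fin N₂ → ℝ) →ₗ[ℝ] (Fin N₁ × Fin N₂ → ℝ) × (Fin N₁ × Fin N₂ → ℝ))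
    (hgrad : grad = LinearMap.prod D₁.mulVecLin D₂.mulVecLin)
    (curl : (Fin N₁ × Fin N₂ → ℝ) × (Fin N₁ × Fin N₂ → ℝ) →ₗ[ℝ] (Fin N₁ × Fin N₂ → ℝ))
    (hcurl : curl = D₁.mulVecLin ∘ₗ LinearMap.snd ℝ _ _ - D₂.mulVecLin ∘ₗ LinearMap.fst ℝ _ _)
    (osc₁ osc₂ : Fin N₁ × Fin N₂ → ℝ)
    (hosc₁ : osc₁ = fun p => oscx p.1) (hosc₂ : osc₂ = fun p => oscy p.2)
    (O : Submodule ℝ ((Fin N₁ × Fin N₂ → ℝ) × (Fin N₁ × Fin N₂ → ℝ)))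
    (hO : O = Submodule.span ℝ {(osc₁, (0 : Fin N₁ × Fin N₂ → ℝ)), ((0 : Fin N₁ × Fin N₂ → ℝ), osc₂)}) :
    LinearMap.ker curl = LinearMap.range grad ⊔ O ∧
      Disjoint (LinearMap.range grad) O ∧
      (∀ u ∈ LinearMap.range grad, ∀ w ∈ O,
        u.1 ⬝ᵥ (Mx ⊗ₖ My).mulVec w.1 + u.2 ⬝ᵥ (Mx ⊗ₖ My).mulVec w.2 = 0) := by
  subst hD₁ hD₂ hgrad hcurl hosc₁ hosc₂ hO
  have horth := orthogonal_range_discreteGrad_oscSpan hMx.isUnit hMy.isUnit hoscx hoscy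
  refine ⟨le_antisymm (ker_discreteCurl_le hMx hMy hDx hDy hoscx hoscy)
      (range_discreteGrad_sup_oscSpan_le_ker (mulVec_one_eq_zero hDx) (mulVec_one_eq_zero hDy)),
    disjoint_of_forall_dotProduct_mulVec_eq_zero (hMx.kronecker hMy) horth, horth⟩

/-- For nullspace consistent tensor product SBP operators in two dimensions, the kernel of the
discrete curl is the `M`-orthogonal direct sum of the image of the discrete gradient and the
two-dimensional space spanned by `(osc₁, 0)` and `(0, osc₂)`, where `osc₁ = osc_x ⊗ 𝟙` and
`osc₂ = 𝟙 ⊗ osc_y`. -/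
theorem ker_curl_eq_im_grad_oplus_osc_2D (N₁ N₂ : ℕ)
    (Dx Mx : Matrix (Fin N₁) (Fin N₁) ℝ) (Dy My : Matrix (Fin N₂) (Fin N₂) ℝ)
    (hMx : Mx.PosDef) (hMxsym : Mx.IsSymm) (hMy : My.PosDef) (hMysym : My.IsSymm)
    (hDx : LinearMap.ker Dx.mulVecLin = Submodule.span ℝ {(fun _ => 1 : Fin N₁ → ℝ)})
    (hDy : LinearMap.ker Dy.mulVecLin = Submodule.span ℝ {(fun _ => 1 : Fin N₂ → ℝ)})
    (oscx : Fin N₁ → ℝ) (oscy : Fin N₂ → ℝ)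
    (hoscx : LinearMap.ker (Mx⁻¹ * Dxᵀ * Mx).mulVecLin = Submodule.span ℝ {oscx})
    (hoscy : LinearMap.ker (My⁻¹ * Dyᵀ * My).mulVecLin = Submodule.span ℝ {oscy})
    (D₁ D₂ : Matrix (Fin N₁ × Fin N₂) (Fin N₁ × Fin N₂) ℝ)
    (hD₁ : D₁ = Dx ⊗ₖ (1 : Matrix (Fin N₂) (Fin N₂) ℝ))
    (hD₂ : D₂ = (1 : Matrix (Fin N₁) (Fin N₁) ℝ) ⊗ₖ Dy)
    (grad : (Fin N₁ × Fin N₂ → ℝ) →ₗ[ℝ] (Fin N₁ × Fin N₂ → ℝ) × (Fin N₁ × Fin N₂ → ℝ))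
    (hgrad : grad = LinearMap.prod D₁.mulVecLin D₂.mulVecLin)
    (curl : (Fin N₁ × Fin N₂ → ℝ) × (Fin N₁ × Fin N₂ → ℝ) →ₗ[ℝ] (Fin N₁ × Fin N₂ → ℝ))
    (hcurl : curl = D₁.mulVecLin ∘ₗ LinearMap.snd ℝ _ _ - D₂.mulVecLin ∘ₗ LinearMap.fst ℝ _ _)
    (osc₁ osc₂ : Fin N₁ × Fin N₂ → ℝ)
    (hosc₁ : osc₁ = fun p => oscx p.1) (hosc₂ : osc₂ = fun p => oscy p.2)
    (O : Submodule ℝ ((Fin N₁ × Fin N₂ → ℝ) × (Fin N₁ × Fin N₂ → ℝ)))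
    (hO : O = Submodule.span ℝ {(osc₁, (0 : Fin N₁ × Fin N₂ → ℝ)), ((0 : Fin N₁ × Fin N₂ → ℝ), osc₂)}) :
    LinearMap.ker curl = LinearMap.range grad ⊔ O ∧
      Disjoint (LinearMap.range grad) O ∧
      (∀ u ∈ LinearMap.range grad, ∀ w ∈ O,
        u.1 ⬝ᵥ (Mx ⊗ₖ My).mulVec w.1 + u.2 ⬝ᵥ (Mx ⊗ₖ My).mulVec w.2 = 0) :=
  ker_curl_eq_im_grad_oplus_osc_2D_general N₁ N₂ Dx Mx Dy My hMx hMy hDx hDy oscx oscy hoscx hoscy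
    D₁ D₂ hD₁ hD₂ grad hgrad curl hcurl osc₁ osc₂ hosc₁ hosc₂ O hO
end

section
/- For nullspace consistent tensor product SBP operators in two dimensions, the kernel of the discrete divergence is the orthogonal direct sum of the image of the discrete rotation rot v = (D₂v, -D₁v) and the span of (0, osc₁) and (osc₂, 0). -/
/-!
`div ∘ rot = D₁ D₂ - D₂ D₁ = 0` since the two tensor factors commute, and `D₂ osc₁ = D₁ osc₂ = 0`
since `Dy 𝟙 = Dx 𝟙 = 0`; hence `im rot + O ≤ ker div`. The `M`-orthogonality of `im rot` and `O` is
the adjoint relation `D₁ᵀ M osc₁ = (Dxᵀ Mx oscx) ⊗ (My 𝟙) = 0` (and its `y`-analogue), and it makes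
the sum direct because `M` is positive definite.

Equality is a dimension count on `V = ℝ^{N₁ × N₂}`, `n = dim V`. Both `ker D₁ ∩ ker D₂` and
`ker D₁ᵀ ∩ ker D₂ᵀ` are at most one-dimensional, because a vector whose columns lie in a line `ℝ a`
and whose rows lie in a line `ℝ b` is a multiple of `a ⊗ b`. So `dim im rot ≥ n - 1`, while `ker div`
is orthogonal to `im (D₁ᵀ, D₂ᵀ)`, of dimension `≥ n - 1`, so `dim ker div ≤ n + 1 ≤ dim (im rot ⊕ O)`.
-/

open Matrix Kronecker LinearMap Module Submodule

namespace Matrix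

variable {K l m n o : Type*}

section CommRing

variable [CommRing K]

theorem transpose_kronecker_one [DecidableEq n] (A : Matrix l m K) :
    (A ⊗ₖ (1 : Matrix n n K))ᵀ = Aᵀ ⊗ₖ (1 : Matrix n n K) := by
  rw [← kroneckerMap_transpose, transpose_one]

theorem transpose_one_kronecker [DecidableEq m] (B : Matrix o n K) :
    ((1 : Matrix m m K) ⊗ₖ B)ᵀ = (1 : Matrix m m K) ⊗ₖ Bᵀ := by
  rw [← kroneckerMap_transpose, transpose_one]

variable [Fintype m] [Fintype n]

theorem kronecker_mulVec_fst (A : Matrix l m K) (B : Matrix o n K) (f : m → K) :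
    (A ⊗ₖ B) *ᵥ (fun p => f p.1) = fun p => (A *ᵥ f) p.1 * (B *ᵥ 1) p.2 := by
  ext p
  simp only [mulVec, dotProduct, Fintype.sum_prod_type, kroneckerMap_apply, Finset.sum_mul_sum,
    Pi.one_apply]
  exact Finset.sum_congr rfl fun _ _ => Finset.sum_congr rfl fun _ _ => by ring

theorem kronecker_mulVec_snd (A : Matrix l m K) (B : Matrix o n K) (g : n → K) :
    (A ⊗ₖ B) *ᵥ (fun p => g p.2) = fun p => (A *ᵥ 1) p.1 * (B *ᵥ g) p.2 := by
  ext p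
  simp only [mulVec, dotProduct, Fintype.sum_prod_type, kroneckerMap_apply, Finset.sum_mul_sum,
    Pi.one_apply]
  exact Finset.sum_congr rfl fun _ _ => Finset.sum_congr rfl fun _ _ => by ring

theorem kronecker_one_mulVec_apply [DecidableEq n] (A : Matrix l m K) (v : m × n → K)
    (i : l) (j : n) : ((A ⊗ₖ (1 : Matrix n n K)) *ᵥ v) (i, j) = (A *ᵥ fun k => v (k, j)) i := by
  simp [mulVec, dotProduct, Fintype.sum_prod_type, one_apply]

theorem one_kronecker_mulVec_apply [DecidableEq m] (B : Matrix o n K) (v : m × n → K)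
    (i : m) (j : o) : (((1 : Matrix m m K) ⊗ₖ B) *ᵥ v) (i, j) = (B *ᵥ fun k => v (i, k)) j := by
  simp [mulVec, dotProduct, Fintype.sum_prod_type, one_apply]

theorem commute_kronecker_one_one_kronecker [DecidableEq m] [DecidableEq n] (A : Matrix m m K)
    (B : Matrix n n K) : Commute (A ⊗ₖ (1 : Matrix n n K)) ((1 : Matrix m m K) ⊗ₖ B) := by
  rw [commute_iff_eq, ← mul_kronecker_mul, ← mul_kronecker_mul]
  simp

theorem mulVec_eq_zero_of_ker_eq_span {A : Matrix l m K} {v : m → K}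
    (h : ker A.mulVecLin = K ∙ v) : A *ᵥ v = 0 :=
  h.ge (mem_span_singleton_self v)

end CommRing

section Field

variable [Field K] [Fintype m]

theorem ker_kronecker_one_inf_ker_one_kronecker_le [Fintype n] [DecidableEq m] [DecidableEq n]
    {A : Matrix m m K} {B : Matrix n n K} {a : m → K} {b : n → K}
    (hA : ker A.mulVecLin ≤ K ∙ a) (hB : ker B.mulVecLin ≤ K ∙ b) :
    ker (A ⊗ₖ (1 : Matrix n n K)).mulVecLin ⊓ ker ((1 : Matrix m m K) ⊗ₖ B).mulVecLin ≤
      K ∙ fun p => a p.1 * b p.2 := by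
  rintro w ⟨hwA, hwB⟩
  simp only [SetLike.mem_coe, mem_ker, mulVecLin_apply] at hwA hwB
  have hcol : ∀ j, ∃ c : K, c • a = fun i => w (i, j) := fun j =>
    mem_span_singleton.mp <| hA <| by
      ext i; simpa [kronecker_one_mulVec_apply] using congrFun hwA (i, j)
  choose c hc using hcol
  have hw : w = fun p => a p.1 * c p.2 := funext fun p => by
    simpa [mul_comm] using (congrFun (hc p.2) p.1).symm
  by_cases ha : a = 0
  · simp [hw, ha]
  obtain ⟨i, hi⟩ := Function.ne_iff.mp ha
  have hrow : a i • c ∈ ker B.mulVecLin := by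
    have hwi : (fun j => w (i, j)) = a i • c := by ext j; simp [hw]
    rw [mem_ker, mulVecLin_apply, ← hwi]
    ext j
    simpa [one_kronecker_mulVec_apply] using congrFun hwB (i, j)
  obtain ⟨t, ht⟩ := mem_span_singleton.mp <| hB <| (smul_mem_iff _ hi).mp hrow
  exact mem_span_singleton.mpr ⟨t, by ext p; simp [hw, ← ht, mul_left_comm]⟩

theorem finrank_ker_mulVecLin_transpose (A : Matrix m m K) :
    finrank K (ker Aᵀ.mulVecLin) = finrank K (ker A.mulVecLin) := by
  have hAT := Aᵀ.mulVecLin.finrank_range_add_finrank_ker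
  have hA := A.mulVecLin.finrank_range_add_finrank_ker
  have := A.rank_transpose
  rw [rank, rank] at this
  omega

theorem ker_mulVecLin_eq_span_of_conj [DecidableEq m] {A M : Matrix m m K} (hM : IsUnit M)
    {v : m → K} (h : ker (M⁻¹ * A * M).mulVecLin = K ∙ v) :
    ker A.mulVecLin = K ∙ (M *ᵥ v) := by
  have hdet : IsUnit M.det := (isUnit_iff_isUnit_det M).mp hM
  have hconj : ker (M⁻¹ * A * M).mulVecLin = (ker A.mulVecLin).comap M.mulVecLin := by
    ext x
    simp only [mem_ker, mem_comap, mulVecLin_apply, Matrix.mul_assoc, ← mulVec_mulVec]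
    refine ⟨fun hx => ?_, fun hx => by rw [hx, mulVec_zero]⟩
    rw [← one_mulVec (A *ᵥ M *ᵥ x), ← mul_nonsing_inv M hdet, ← mulVec_mulVec, hx, mulVec_zero]
  rw [← map_comap_eq_of_surjective (f := M.mulVecLin) (mulVec_surjective_iff_isUnit.mpr hM)
    (ker A.mulVecLin), ← hconj, h, Submodule.map_span, Set.image_singleton, mulVecLin_apply]

theorem ne_zero_of_ker_conj_transpose_eq_span [DecidableEq m] {D M : Matrix m m K}
    (hM : IsUnit M) {u v : m → K} (hu : u ≠ 0) (hD : ker D.mulVecLin = K ∙ u)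
    (hv : ker (M⁻¹ * Dᵀ * M).mulVecLin = K ∙ v) : v ≠ 0 := by
  intro hv0
  have := finrank_ker_mulVecLin_transpose D
  rw [hD, ker_mulVecLin_eq_span_of_conj hM hv, hv0, mulVec_zero, span_zero_singleton, finrank_bot,
    finrank_span_singleton hu] at this
  exact zero_ne_one this

end Field

end Matrix

namespace SBP

theorem finrank_span_pair_of_ne_zero {K E F : Type*} [Field K] [AddCommGroup E] [Module K E]
    [AddCommGroup F] [Module K F] {a : F} {b : E} (ha : a ≠ 0) (hb : b ≠ 0) :
    finrank K (span K {((0 : E), a), (b, 0)}) = 2 := by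
  have hli : LinearIndependent K ![((0 : E), a), (b, 0)] :=
    (LinearIndependent.pair_iff' (by simpa using ha)).mpr fun s h =>
      hb (by simpa using (congrArg Prod.fst h).symm)
  rw [← range_cons_cons_empty, finrank_span_eq_card hli, Fintype.card_fin]

variable {ι : Type*} [Fintype ι]

def div (A B : Matrix ι ι ℝ) : (ι → ℝ) × (ι → ℝ) →ₗ[ℝ] ι → ℝ :=
  A.mulVecLin ∘ₗ LinearMap.fst ℝ _ _ + B.mulVecLin ∘ₗ LinearMap.snd ℝ _ _

def rot (A B : Matrix ι ι ℝ) : (ι → ℝ) →ₗ[ℝ] (ι → ℝ) × (ι → ℝ) :=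
  LinearMap.prod B.mulVecLin (-A.mulVecLin)

variable {A B M : Matrix ι ι ℝ} {a b : ι → ℝ}

theorem range_rot_le_ker_div (hAB : Commute A B) : range (rot A B) ≤ ker (div A B) := by
  rintro _ ⟨v, rfl⟩
  simp [div, rot, mulVec_mulVec, mulVec_neg, hAB.eq]

theorem span_pair_le_ker_div (ha : B *ᵥ a = 0) (hb : A *ᵥ b = 0) :
    span ℝ {(0, a), (b, 0)} ≤ ker (div A B) := by
  simp [span_le, Set.insert_subset_iff, div, ha, hb]

theorem rot_orthogonal_span_pair (ha : (Aᵀ * M) *ᵥ a = 0) (hb : (Bᵀ * M) *ᵥ b = 0) :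
    ∀ u ∈ range (rot A B), ∀ w ∈ span ℝ {(0, a), (b, 0)},
      u.1 ⬝ᵥ M *ᵥ w.1 + u.2 ⬝ᵥ M *ᵥ w.2 = 0 := by
  rintro _ ⟨v, rfl⟩ w hw
  obtain ⟨s, t, rfl⟩ := mem_span_pair.mp hw
  have hadj : ∀ (C : Matrix ι ι ℝ) (x : ι → ℝ), (C *ᵥ v) ⬝ᵥ M *ᵥ x = v ⬝ᵥ (Cᵀ * M) *ᵥ x := by
    intro C x
    rw [← mulVec_mulVec, dotProduct_mulVec v, vecMul_transpose]
  simp [rot, hadj, mulVec_smul, ha, hb]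

theorem disjoint_of_orthogonal (hM : M.PosDef) {S T : Submodule ℝ ((ι → ℝ) × (ι → ℝ))}
    (h : ∀ u ∈ S, ∀ w ∈ T, u.1 ⬝ᵥ M *ᵥ w.1 + u.2 ⬝ᵥ M *ᵥ w.2 = 0) : Disjoint S T := by
  refine disjoint_def.mpr fun x hS hT => ?_
  have hx := h x hS x hT
  have hnonneg : ∀ y : ι → ℝ, 0 ≤ y ⬝ᵥ M *ᵥ y := fun y => by
    simpa using hM.posSemidef.dotProduct_mulVec_nonneg y
  have hpos : ∀ y : ι → ℝ, y ≠ 0 → 0 < y ⬝ᵥ M *ᵥ y := fun y hy => by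
    simpa using hM.dotProduct_mulVec_pos hy
  have h₁ := hnonneg x.1
  have h₂ := hnonneg x.2
  exact Prod.ext (by_contra fun hne => by linarith [hpos _ hne])
    (by_contra fun hne => by linarith [hpos _ hne])

theorem finrank_ker_div_le (A B : Matrix ι ι ℝ) :
    finrank ℝ (ker (div A B)) ≤
      Fintype.card ι + finrank ℝ ↥(ker Aᵀ.mulVecLin ⊓ ker Bᵀ.mulVecLin) := by
  classical
  have horth : Disjoint (ker (div A B)) (range (Aᵀ.mulVecLin.prod Bᵀ.mulVecLin)) := by
    refine disjoint_of_orthogonal PosDef.one ?_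
    rintro x hx _ ⟨w, rfl⟩
    have hx : A *ᵥ x.1 + B *ᵥ x.2 = 0 := hx
    calc x.1 ⬝ᵥ 1 *ᵥ Aᵀ *ᵥ w + x.2 ⬝ᵥ 1 *ᵥ Bᵀ *ᵥ w = (A *ᵥ x.1 + B *ᵥ x.2) ⬝ᵥ w := by
          rw [one_mulVec, one_mulVec, dotProduct_mulVec, dotProduct_mulVec, vecMul_transpose,
            vecMul_transpose, add_dotProduct]
      _ = 0 := by rw [hx, zero_dotProduct]
  have hsum := finrank_add_finrank_le_of_disjoint horth
  have hrank := (Aᵀ.mulVecLin.prod Bᵀ.mulVecLin).finrank_range_add_finrank_ker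
  rw [ker_prod] at hrank
  simp only [finrank_prod, finrank_fintype_fun_eq_card] at hsum hrank
  omega

theorem ker_div_eq_range_rot_sup (hAB : Commute A B) (ha : a ≠ 0) (hb : b ≠ 0)
    (hBa : B *ᵥ a = 0) (hAb : A *ᵥ b = 0)
    (hdisj : Disjoint (range (rot A B)) (span ℝ {(0, a), (b, 0)}))
    {c d : ι → ℝ} (hker : ker A.mulVecLin ⊓ ker B.mulVecLin ≤ ℝ ∙ c)
    (hkerT : ker Aᵀ.mulVecLin ⊓ ker Bᵀ.mulVecLin ≤ ℝ ∙ d) :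
    ker (div A B) = range (rot A B) ⊔ span ℝ {(0, a), (b, 0)} := by
  refine (eq_of_le_of_finrank_le
    (sup_le (range_rot_le_ker_div hAB) (span_pair_le_ker_div hBa hAb)) ?_).symm
  have hline : ∀ {S : Submodule ℝ (ι → ℝ)} {e : ι → ℝ}, S ≤ ℝ ∙ e → finrank ℝ S ≤ 1 :=
    fun h => (finrank_mono h).trans ((finrank_span_le_card _).trans (by simp))
  have hrot := (rot A B).finrank_range_add_finrank_ker
  rw [show ker (rot A B) = ker A.mulVecLin ⊓ ker B.mulVecLin by
    rw [rot, ker_prod, ker_neg, inf_comm], finrank_fintype_fun_eq_card] at hrot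
  have hsup := finrank_sup_add_finrank_inf_eq (range (rot A B)) (span ℝ {(0, a), (b, 0)})
  rw [hdisj.eq_bot, finrank_bot, finrank_span_pair_of_ne_zero ha hb] at hsup
  have hdiv := finrank_ker_div_le A B
  have hker₁ := hline hker
  have hkerT₁ := hline hkerT
  omega

section TensorProduct

variable {m n : Type*} [Fintype m] [Fintype n] [DecidableEq m] [DecidableEq n]
  {Dx Mx : Matrix m m ℝ} {Dy My : Matrix n n ℝ} {oscx : m → ℝ} {oscy : n → ℝ}

theorem rot_kronecker_orthogonal (hx : Dxᵀ *ᵥ Mx *ᵥ oscx = 0) (hy : Dyᵀ *ᵥ My *ᵥ oscy = 0) :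
    ∀ u ∈ range (rot (Dx ⊗ₖ (1 : Matrix n n ℝ)) ((1 : Matrix m m ℝ) ⊗ₖ Dy)),
      ∀ w ∈ span ℝ {(0, fun p : m × n => oscx p.1), (fun p => oscy p.2, 0)},
        u.1 ⬝ᵥ (Mx ⊗ₖ My) *ᵥ w.1 + u.2 ⬝ᵥ (Mx ⊗ₖ My) *ᵥ w.2 = 0 := by
  rw [mulVec_mulVec] at hx hy
  refine rot_orthogonal_span_pair ?_ ?_
  · rw [transpose_kronecker_one, ← mul_kronecker_mul, Matrix.one_mul, kronecker_mulVec_fst, hx]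
    ext; simp
  · rw [transpose_one_kronecker, ← mul_kronecker_mul, Matrix.one_mul, kronecker_mulVec_snd, hy]
    ext; simp

theorem ker_div_kronecker_eq [Nonempty m] [Nonempty n]
    (hDx : ker Dx.mulVecLin = ℝ ∙ 1) (hDy : ker Dy.mulVecLin = ℝ ∙ 1)
    {ax : m → ℝ} {ay : n → ℝ} (hDxT : ker Dxᵀ.mulVecLin ≤ ℝ ∙ ax)
    (hDyT : ker Dyᵀ.mulVecLin ≤ ℝ ∙ ay) (hx : oscx ≠ 0) (hy : oscy ≠ 0)
    (hdisj : Disjoint (range (rot (Dx ⊗ₖ (1 : Matrix n n ℝ)) ((1 : Matrix m m ℝ) ⊗ₖ Dy)))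
      (span ℝ {(0, fun p : m × n => oscx p.1), (fun p => oscy p.2, 0)})) :
    ker (div (Dx ⊗ₖ (1 : Matrix n n ℝ)) ((1 : Matrix m m ℝ) ⊗ₖ Dy)) =
      range (rot (Dx ⊗ₖ (1 : Matrix n n ℝ)) ((1 : Matrix m m ℝ) ⊗ₖ Dy)) ⊔
        span ℝ {(0, fun p : m × n => oscx p.1), (fun p => oscy p.2, 0)} := by
  obtain ⟨i₀⟩ := ‹Nonempty m›
  obtain ⟨j₀⟩ := ‹Nonempty n›
  have hkerT := ker_kronecker_one_inf_ker_one_kronecker_le (n := n) hDxT hDyT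
  rw [← transpose_kronecker_one, ← transpose_one_kronecker] at hkerT
  exact ker_div_eq_range_rot_sup (commute_kronecker_one_one_kronecker Dx Dy)
    (fun h => hx (funext fun i => congrFun h (i, j₀)))
    (fun h => hy (funext fun j => congrFun h (i₀, j)))
    (by rw [kronecker_mulVec_fst, mulVec_eq_zero_of_ker_eq_span hDy]; ext; simp)
    (by rw [kronecker_mulVec_snd, mulVec_eq_zero_of_ker_eq_span hDx]; ext; simp)
    hdisj (ker_kronecker_one_inf_ker_one_kronecker_le hDx.le hDy.le) hkerT

end TensorProduct

end SBP

theorem ker_div_eq_im_rot_oplus_osc_2D_general (N₁ N₂ : ℕ)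
    (Dx Mx : Matrix (Fin N₁) (Fin N₁) ℝ) (Dy My : Matrix (Fin N₂) (Fin N₂) ℝ)
    (hMx : Mx.PosDef) (hMy : My.PosDef)
    (hDx : LinearMap.ker Dx.mulVecLin = Submodule.span ℝ {(fun _ => 1 : Fin N₁ → ℝ)})
    (hDy : LinearMap.ker Dy.mulVecLin = Submodule.span ℝ {(fun _ => 1 : Fin N₂ → ℝ)})
    (oscx : Fin N₁ → ℝ) (oscy : Fin N₂ → ℝ)
    (hoscx : LinearMap.ker (Mx⁻¹ * Dxᵀ * Mx).mulVecLin = Submodule.span ℝ {oscx})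
    (hoscy : LinearMap.ker (My⁻¹ * Dyᵀ * My).mulVecLin = Submodule.span ℝ {oscy})
    (D₁ D₂ : Matrix (Fin N₁ × Fin N₂) (Fin N₁ × Fin N₂) ℝ)
    (hD₁ : D₁ = Dx ⊗ₖ (1 : Matrix (Fin N₂) (Fin N₂) ℝ))
    (hD₂ : D₂ = (1 : Matrix (Fin N₁) (Fin N₁) ℝ) ⊗ₖ Dy)
    (rot : (Fin N₁ × Fin N₂ → ℝ) →ₗ[ℝ] (Fin N₁ × Fin N₂ → ℝ) × (Fin N₁ × Fin N₂ → ℝ))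
    (hrot : rot = LinearMap.prod D₂.mulVecLin (-D₁.mulVecLin))
    (div : (Fin N₁ × Fin N₂ → ℝ) × (Fin N₁ × Fin N₂ → ℝ) →ₗ[ℝ] (Fin N₁ × Fin N₂ → ℝ))
    (hdiv : div = D₁.mulVecLin ∘ₗ LinearMap.fst ℝ _ _ + D₂.mulVecLin ∘ₗ LinearMap.snd ℝ _ _)
    (osc₁ osc₂ : Fin N₁ × Fin N₂ → ℝ)
    (hosc₁ : osc₁ = fun p => oscx p.1) (hosc₂ : osc₂ = fun p => oscy p.2)
    (O : Submodule ℝ ((Fin N₁ × Fin N₂ → ℝ) × (Fin N₁ × Fin N₂ → ℝ)))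
    (hO : O = Submodule.span ℝ {((0 : Fin N₁ × Fin N₂ → ℝ), osc₁), (osc₂, (0 : Fin N₁ × Fin N₂ → ℝ))}) :
    LinearMap.ker div = LinearMap.range rot ⊔ O ∧
      Disjoint (LinearMap.range rot) O ∧
      (∀ u ∈ LinearMap.range rot, ∀ w ∈ O,
        u.1 ⬝ᵥ (Mx ⊗ₖ My).mulVec w.1 + u.2 ⬝ᵥ (Mx ⊗ₖ My).mulVec w.2 = 0) := by
  subst hD₁ hD₂ hrot hdiv hosc₁ hosc₂ hO
  have hDxT := ker_mulVecLin_eq_span_of_conj hMx.isUnit hoscx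
  have hDyT := ker_mulVecLin_eq_span_of_conj hMy.isUnit hoscy
  have horth := SBP.rot_kronecker_orthogonal (mulVec_eq_zero_of_ker_eq_span hDxT)
    (mulVec_eq_zero_of_ker_eq_span hDyT)
  have hdisj := SBP.disjoint_of_orthogonal (hMx.kronecker hMy) horth
  refine ⟨?_, hdisj, horth⟩
  rcases isEmpty_or_nonempty (Fin N₁ × Fin N₂) with _ | ⟨⟨i, j⟩⟩
  · exact Subsingleton.elim _ _
  have := Nonempty.intro i
  have := Nonempty.intro j
  exact SBP.ker_div_kronecker_eq hDx hDy hDxT.le hDyT.le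
    (ne_zero_of_ker_conj_transpose_eq_span hMx.isUnit one_ne_zero hDx hoscx)
    (ne_zero_of_ker_conj_transpose_eq_span hMy.isUnit one_ne_zero hDy hoscy) hdisj

/-- For nullspace consistent tensor product SBP operators in two dimensions, the kernel of the
discrete divergence is the `M`-orthogonal direct sum of the image of the discrete rotation
`rot v = (D₂ v, -D₁ v)` and the span of `(0, osc₁)` and `(osc₂, 0)`. -/
theorem ker_div_eq_im_rot_oplus_osc_2D (N₁ N₂ : ℕ)
    (Dx Mx : Matrix (Fin N₁) (Fin N₁) ℝ) (Dy My : Matrix (Fin N₂) (Fin N₂) ℝ)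
    (hMx : Mx.PosDef) (hMxsym : Mx.IsSymm) (hMy : My.PosDef) (hMysym : My.IsSymm)
    (hDx : LinearMap.ker Dx.mulVecLin = Submodule.span ℝ {(fun _ => 1 : Fin N₁ → ℝ)})
    (hDy : LinearMap.ker Dy.mulVecLin = Submodule.span ℝ {(fun _ => 1 : Fin N₂ → ℝ)})
    (oscx : Fin N₁ → ℝ) (oscy : Fin N₂ → ℝ)
    (hoscx : LinearMap.ker (Mx⁻¹ * Dxᵀ * Mx).mulVecLin = Submodule.span ℝ {oscx})
    (hoscy : LinearMap.ker (My⁻¹ * Dyᵀ * My).mulVecLin = Submodule.span ℝ {oscy})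
    (D₁ D₂ : Matrix (Fin N₁ × Fin N₂) (Fin N₁ × Fin N₂) ℝ)
    (hD₁ : D₁ = Dx ⊗ₖ (1 : Matrix (Fin N₂) (Fin N₂) ℝ))
    (hD₂ : D₂ = (1 : Matrix (Fin N₁) (Fin N₁) ℝ) ⊗ₖ Dy)
    (rot : (Fin N₁ × Fin N₂ → ℝ) →ₗ[ℝ] (Fin N₁ × Fin N₂ → ℝ) × (Fin N₁ × Fin N₂ → ℝ))
    (hrot : rot = LinearMap.prod D₂.mulVecLin (-D₁.mulVecLin))
    (div : (Fin N₁ × Fin N₂ → ℝ) × (Fin N₁ × Fin N₂ → ℝ) →ₗ[ℝ] (Fin N₁ × Fin N₂ → ℝ))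
    (hdiv : div = D₁.mulVecLin ∘ₗ LinearMap.fst ℝ _ _ + D₂.mulVecLin ∘ₗ LinearMap.snd ℝ _ _)
    (osc₁ osc₂ : Fin N₁ × Fin N₂ → ℝ)
    (hosc₁ : osc₁ = fun p => oscx p.1) (hosc₂ : osc₂ = fun p => oscy p.2)
    (O : Submodule ℝ ((Fin N₁ × Fin N₂ → ℝ) × (Fin N₁ × Fin N₂ → ℝ)))
    (hO : O = Submodule.span ℝ {((0 : Fin N₁ × Fin N₂ → ℝ), osc₁), (osc₂, (0 : Fin N₁ × Fin N₂ → ℝ))}) :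
    LinearMap.ker div = LinearMap.range rot ⊔ O ∧
      Disjoint (LinearMap.range rot) O ∧
      (∀ u ∈ LinearMap.range rot, ∀ w ∈ O,
        u.1 ⬝ᵥ (Mx ⊗ₖ My).mulVec w.1 + u.2 ⬝ᵥ (Mx ⊗ₖ My).mulVec w.2 = 0) :=
  ker_div_eq_im_rot_oplus_osc_2D_general N₁ N₂ Dx Mx Dy My hMx hMy hDx hDy oscx oscy hoscx hoscy D₁
    D₂ hD₁ hD₂ rot hrot div hdiv osc₁ osc₂ hosc₁ hosc₂ O hO
end

section
/- Let D₁ = D_x⊗I_y, D₂ = I_x⊗D_y be nullspace consistent tensor product SBP operators with SPD mass matrix M = M_x⊗M_y. If a discrete vector field (u₁,u₂) satisfies D₁u₂ = D₂u₁ and u₂ is M-orthogonal to osc₂ = 𝟙⊗osc_y, then u₂ lies in the image of D₂. -/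
/-!
Write `u₂ = vec U₂`, so that `D₁ u₂ = vec (U₂ Dxᵀ)` and `D₂ u₁ = vec (Dy U₁)`. The vector
`m = My osc_y` spans `ker Dyᵀ`, hence `im Dy = m^⊥`, and it suffices that every column of `U₂`
is orthogonal to `m`, i.e. that `c = mᵀ U₂` vanishes. Applying `mᵀ` to the curl-free relation
gives `cᵀ Dxᵀ = (mᵀ Dy) U₁ = 0`, so `c` is a multiple of `𝟙`, and the orthogonality hypothesis
reads `cᵀ Mx 𝟙 = 0`; positivity of `Mx` then forces `c = 0`.
-/

open Matrix Kronecker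

namespace Matrix

variable {l m n p : Type*} [Fintype m] [Fintype n]

theorem mem_range_mulVecLin_iff {𝕜 : Type*} [RCLike 𝕜] [DecidableEq m] [DecidableEq n]
    (A : Matrix m n 𝕜) (w : m → 𝕜) :
    w ∈ LinearMap.range A.mulVecLin ↔ ∀ z, Aᴴ *ᵥ z = 0 → w ⬝ᵥ star z = 0 := by
  have h := Submodule.orthogonal_orthogonal (LinearMap.range (toEuclideanLin A))
  rw [LinearMap.orthogonal_range, ← toEuclideanLin_conjTranspose_eq_adjoint] at h
  have h_mem := congrArg (WithLp.toLp 2 w ∈ ·) h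
  simp only [Submodule.mem_orthogonal, EuclideanSpace.inner_eq_star_dotProduct, LinearMap.mem_ker,
    LinearMap.mem_range, toLpLin_apply, eq_iff_iff, (WithLp.toLp_injective 2).eq_iff] at h_mem
  constructor
  · rintro ⟨y, rfl⟩ z
    exact h_mem.mpr ⟨WithLp.toLp 2 y, rfl⟩ (WithLp.toLp 2 z)
  · intro H
    obtain ⟨y, hy⟩ := h_mem.mp fun u => H u.ofLp
    exact ⟨y.ofLp, hy⟩

theorem mem_range_mulVecLin_iff_dotProduct_eq_zero {𝕜 : Type*} [RCLike 𝕜] [DecidableEq m]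
    [DecidableEq n] {A : Matrix m n 𝕜} {z₀ : m → 𝕜}
    (hker : LinearMap.ker Aᴴ.mulVecLin = 𝕜 ∙ z₀) (w : m → 𝕜) :
    w ∈ LinearMap.range A.mulVecLin ↔ w ⬝ᵥ star z₀ = 0 := by
  have hz₀ : Aᴴ *ᵥ z₀ = 0 := by
    change z₀ ∈ LinearMap.ker Aᴴ.mulVecLin
    exact hker ▸ Submodule.mem_span_singleton_self z₀
  rw [mem_range_mulVecLin_iff]
  refine ⟨fun H => H z₀ hz₀, fun H z hz => ?_⟩
  obtain ⟨t, rfl⟩ := Submodule.mem_span_singleton.mp (hker ▸ hz : z ∈ 𝕜 ∙ z₀)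
  rw [star_smul, dotProduct_smul, H, smul_zero]

theorem ker_mulVecLin_eq_span_mulVec [DecidableEq n] {K : Type*} [Field K] {M B : Matrix n n K}
    (hM : IsUnit M) {o : n → K} (h : LinearMap.ker (M⁻¹ * B * M).mulVecLin = K ∙ o) :
    LinearMap.ker B.mulVecLin = K ∙ (M *ᵥ o) := by
  have hMinv : LinearMap.ker M⁻¹.mulVecLin = ⊥ := LinearMap.ker_eq_bot_of_injective
    (mulVec_injective_iff_isUnit.mpr (isUnit_nonsing_inv_iff.mpr hM))
  have hcomap : LinearMap.ker (M⁻¹ * B * M).mulVecLin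
      = (LinearMap.ker B.mulVecLin).comap M.mulVecLin := by
    rw [mulVecLin_mul, mulVecLin_mul, LinearMap.ker_comp, LinearMap.ker_comp, hMinv,
      Submodule.comap_bot]
  rw [← Submodule.map_comap_eq_of_surjective (f := M.mulVecLin)
      (mulVec_surjective_iff_isUnit.mpr hM) (LinearMap.ker B.mulVecLin), ← hcomap, h,
    Submodule.map_span, Set.image_singleton, mulVecLin_apply]

theorem eq_zero_of_mem_span_of_dotProduct_mulVec_eq_zero {R : Type*} [CommRing R] [PartialOrder R]
    [StarRing R] {M : Matrix n n R} (hM : M.PosDef) {c v : n → R} (hc : c ∈ R ∙ v)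
    (h : star c ⬝ᵥ M *ᵥ v = 0) : c = 0 := by
  obtain ⟨t, rfl⟩ := Submodule.mem_span_singleton.mp hc
  by_contra hne
  have hpos := hM.dotProduct_mulVec_pos hne
  rw [mulVec_smul, dotProduct_smul, h, smul_zero] at hpos
  exact hpos.false

theorem kronecker_mulVec_vec_vecMulVec {R : Type*} [CommSemiring R] (A : Matrix l m R)
    (B : Matrix p n R) (a : m → R) (b : n → R) :
    (B ⊗ₖ A) *ᵥ vec (vecMulVec a b) = vec (vecMulVec (A *ᵥ a) (B *ᵥ b)) := by
  rw [kronecker_mulVec_vec, mul_vecMulVec, vecMulVec_mul, vecMul_transpose]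

theorem vec_dotProduct_vec_vecMulVec {R : Type*} [CommSemiring R] (X : Matrix m n R) (a : m → R)
    (b : n → R) : vec X ⬝ᵥ vec (vecMulVec a b) = a ᵥ* X ⬝ᵥ b := by
  simp only [dotProduct, vec, vecMulVec_apply, vecMul, Fintype.sum_prod_type, Finset.sum_mul]
  exact Finset.sum_congr rfl fun _ _ => Finset.sum_congr rfl fun _ _ => by ring

theorem exists_mul_eq_of_forall_col_mem_range {R : Type*} [CommSemiring R] {A : Matrix l m R}
    {X : Matrix l p R} (h : ∀ j, Xᵀ j ∈ LinearMap.range A.mulVecLin) :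
    ∃ V : Matrix m p R, A * V = X := by
  choose v hv using h
  exact ⟨(of v)ᵀ, ext fun i j => congrFun (hv j) i⟩

end Matrix

theorem u₂_mem_image_D₂_general (N₁ N₂ : ℕ)
    (Dx Mx : Matrix (Fin N₁) (Fin N₁) ℝ) (Dy My : Matrix (Fin N₂) (Fin N₂) ℝ)
    (hMx : Mx.PosDef) (hMy : My.PosDef)
    (hDx : LinearMap.ker Dx.mulVecLin = Submodule.span ℝ {(fun _ => 1 : Fin N₁ → ℝ)})
    (oscy : Fin N₂ → ℝ)
    (hoscy : LinearMap.ker (My⁻¹ * Dyᵀ * My).mulVecLin = Submodule.span ℝ {oscy})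
    (D₁ D₂ : Matrix (Fin N₁ × Fin N₂) (Fin N₁ × Fin N₂) ℝ)
    (hD₁ : D₁ = Dx ⊗ₖ (1 : Matrix (Fin N₂) (Fin N₂) ℝ))
    (hD₂ : D₂ = (1 : Matrix (Fin N₁) (Fin N₁) ℝ) ⊗ₖ Dy)
    (osc₂ : Fin N₁ × Fin N₂ → ℝ) (hosc₂ : osc₂ = fun p => oscy p.2)
    (u₁ u₂ : Fin N₁ × Fin N₂ → ℝ)
    (hcurlfree : D₁.mulVec u₂ = D₂.mulVec u₁)
    (horth : u₂ ⬝ᵥ (Mx ⊗ₖ My).mulVec osc₂ = 0) :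
    ∃ v₂, D₂.mulVec v₂ = u₂ := by
  subst hD₁ hD₂ hosc₂
  obtain ⟨U₁, rfl⟩ := vec_bijective.surjective u₁
  obtain ⟨U₂, rfl⟩ := vec_bijective.surjective u₂
  set m := My *ᵥ oscy
  have hker : LinearMap.ker Dyᴴ.mulVecLin = ℝ ∙ m := by
    rw [conjTranspose_eq_transpose_of_trivial]
    exact ker_mulVecLin_eq_span_mulVec hMy.isUnit hoscy
  have hmDy : m ᵥ* Dy = 0 := by
    rw [← mulVec_transpose, ← conjTranspose_eq_transpose_of_trivial]
    exact (hker ▸ Submodule.mem_span_singleton_self m : m ∈ LinearMap.ker Dyᴴ.mulVecLin)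
  have hcurl : U₂ * Dxᵀ = Dy * U₁ := by
    rwa [kronecker_mulVec_vec, ← vec_mul_eq_mulVec, Matrix.one_mul, vec_inj] at hcurlfree
  have hc_ker : Dx *ᵥ (m ᵥ* U₂) = 0 := by
    rw [← vecMul_transpose, vecMul_vecMul, hcurl, ← vecMul_vecMul, hmDy, zero_vecMul]
  have hosc : (fun p : Fin N₁ × Fin N₂ => oscy p.2) = vec (vecMulVec oscy fun _ => 1) := by
    ext; simp [vecMulVec_apply]
  have hc_orth : (m ᵥ* U₂) ⬝ᵥ Mx *ᵥ (fun _ => 1) = 0 := by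
    rwa [hosc, kronecker_mulVec_vec_vecMulVec, vec_dotProduct_vec_vecMulVec] at horth
  have hc : m ᵥ* U₂ = 0 := eq_zero_of_mem_span_of_dotProduct_mulVec_eq_zero hMx
    (by rw [← hDx]; exact hc_ker) (by rwa [star_trivial])
  obtain ⟨V, hV⟩ := exists_mul_eq_of_forall_col_mem_range fun i =>
    (mem_range_mulVecLin_iff_dotProduct_eq_zero hker _).mpr <| by
      rw [star_trivial, dotProduct_comm]; exact congrFun hc i
  exact ⟨vec V, by rw [← vec_mul_eq_mulVec, hV]⟩

/-- Let `D₁ = D_x ⊗ I_y`, `D₂ = I_x ⊗ D_y` be nullspace consistent tensor product SBP operators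
with SPD mass matrix `M = M_x ⊗ M_y`. If a discrete vector field `(u₁, u₂)` satisfies
`D₁ u₂ = D₂ u₁` and `u₂` is `M`-orthogonal to `osc₂ = 𝟙 ⊗ osc_y`, then `u₂` lies in the image
of `D₂`. -/
theorem u₂_mem_image_D₂ (N₁ N₂ : ℕ)
    (Dx Mx : Matrix (Fin N₁) (Fin N₁) ℝ) (Dy My : Matrix (Fin N₂) (Fin N₂) ℝ)
    (hMx : Mx.PosDef) (hMxsym : Mx.IsSymm) (hMy : My.PosDef) (hMysym : My.IsSymm)
    (hDx : LinearMap.ker Dx.mulVecLin = Submodule.span ℝ {(fun _ => 1 : Fin N₁ → ℝ)})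
    (hDy : LinearMap.ker Dy.mulVecLin = Submodule.span ℝ {(fun _ => 1 : Fin N₂ → ℝ)})
    (oscy : Fin N₂ → ℝ)
    (hoscy : LinearMap.ker (My⁻¹ * Dyᵀ * My).mulVecLin = Submodule.span ℝ {oscy})
    (D₁ D₂ : Matrix (Fin N₁ × Fin N₂) (Fin N₁ × Fin N₂) ℝ)
    (hD₁ : D₁ = Dx ⊗ₖ (1 : Matrix (Fin N₂) (Fin N₂) ℝ))
    (hD₂ : D₂ = (1 : Matrix (Fin N₁) (Fin N₁) ℝ) ⊗ₖ Dy)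
    (osc₂ : Fin N₁ × Fin N₂ → ℝ) (hosc₂ : osc₂ = fun p => oscy p.2)
    (u₁ u₂ : Fin N₁ × Fin N₂ → ℝ)
    (hcurlfree : D₁.mulVec u₂ = D₂.mulVec u₁)
    (horth : u₂ ⬝ᵥ (Mx ⊗ₖ My).mulVec osc₂ = 0) :
    ∃ v₂, D₂.mulVec v₂ = u₂ :=
  u₂_mem_image_D₂_general N₁ N₂ Dx Mx Dy My hMx hMy hDx oscy hoscy D₁ D₂ hD₁ hD₂ osc₂ hosc₂ u₁ u₂
    hcurlfree horth
end

section
/- For nullspace consistent tensor product SBP operators in three dimensions, the kernel of the discrete curl equals the orthogonal direct sum of the image of the discrete gradient and the three-dimensional span of (osc₁,0,0), (0,osc₂,0), (0,0,osc₃); in particular dim ker curl = N₁N₂N₃ + 2 and dim im grad = N₁N₂N₃ - 1. -/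
/-!
Each one-dimensional operator `D` has a homotopy inverse `P`: `D P = 1 - Π` and `P D = 1 - E`,
where `E` projects onto the constants `ker D` and `Π` is the `M`-orthogonal projection onto
`osc`, whose kernel is `range D` because `Dᵀ M osc = 0`. Tensoring with identities gives
operators that commute across the three directions, and for a curl-free field `u` the potential
`φ = P₁u₁ + E₁P₂u₂ + E₁E₂P₃u₃` leaves the residual
`u - grad φ = (Π₁E₂E₃u₁, E₁Π₂E₃u₂, E₁E₂Π₃u₃)`. These rank-one tensor products have the lines
through `osc₁`, `osc₂`, `osc₃` as ranges, while `ker grad` is the range of `E₁E₂E₃`, the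
constants. The sum is direct because `Πₛ` annihilates `range Dₛ` but fixes the `s`-th residual,
and it is `M`-orthogonal again because `Dₛᵀ M oscₛ = 0`.
-/

open Matrix Kronecker

/-- Grid functions on a three-dimensional tensor product grid. -/
abbrev GridFun3 (N₁ N₂ N₃ : ℕ) := Fin N₁ × Fin N₂ × Fin N₃ → ℝ

/-- `p` inverts `d` up to the projection `e` onto `ker d` and the projection `π` along
`range d`. -/
structure IsHomotopyInverse {R : Type*} [Ring R] (d p e π : R) : Prop where
  d_mul_p : d * p = 1 - π
  p_mul_d : p * d = 1 - e
  d_mul_e : d * e = 0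
  π_mul_d : π * d = 0

namespace IsHomotopyInverse

section Ring

variable {R S : Type*} [Ring R] [Ring S] {d p e π : R}

theorem map (h : IsHomotopyInverse d p e π) (f : R →+* S) :
    IsHomotopyInverse (f d) (f p) (f e) (f π) where
  d_mul_p := by rw [← map_mul, h.d_mul_p, map_sub, map_one]
  p_mul_d := by rw [← map_mul, h.p_mul_d, map_sub, map_one]
  d_mul_e := by rw [← map_mul, h.d_mul_e, map_zero]
  π_mul_d := by rw [← map_mul, h.π_mul_d, map_zero]

theorem π_mul_π (h : IsHomotopyInverse d p e π) : π * π = π := by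
  have hπ : π = 1 - d * p := by rw [h.d_mul_p, sub_sub_cancel]
  calc π * π = π - (d * p) * (1 - d * p) := by rw [hπ]; noncomm_ring
    _ = π - (d * e) * p := by
      rw [mul_sub, mul_one, mul_assoc d p, ← mul_assoc p, h.p_mul_d]; noncomm_ring
    _ = π := by rw [h.d_mul_e, zero_mul, sub_zero]

end Ring

variable {K V : Type*} [Semiring K] [AddCommGroup V] [Module K V] {d p e π : Module.End K V}

theorem apply_p_d (h : IsHomotopyInverse d p e π) (v : V) : p (d v) = v - e v := by
  rw [← Module.End.mul_apply, h.p_mul_d]; rfl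

theorem apply_d_p (h : IsHomotopyInverse d p e π) (v : V) : d (p v) = v - π v := by
  rw [← Module.End.mul_apply, h.d_mul_p]; rfl

theorem apply_d_e (h : IsHomotopyInverse d p e π) (v : V) : d (e v) = 0 := by
  rw [← Module.End.mul_apply, h.d_mul_e]; rfl

theorem apply_π_d (h : IsHomotopyInverse d p e π) (v : V) : π (d v) = 0 := by
  rw [← Module.End.mul_apply, h.π_mul_d]; rfl

theorem apply_π_π (h : IsHomotopyInverse d p e π) (v : V) : π (π v) = π v := by
  rw [← Module.End.mul_apply, h.π_mul_π]

theorem apply_e_of_d_eq_zero (h : IsHomotopyInverse d p e π) {v : V} (hv : d v = 0) :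
    e v = v := by
  have := h.apply_p_d v
  rwa [hv, map_zero, eq_comm, sub_eq_zero, eq_comm] at this

end IsHomotopyInverse

section DivisionRing

variable {K V : Type*} [DivisionRing K] [AddCommGroup V] [Module K V]

theorem exists_isHomotopyInverse {d e π : Module.End K V} (he : e * e = e) (hπ : π * π = π)
    (hker : LinearMap.ker d = LinearMap.range e) (hrange : LinearMap.range d = LinearMap.ker π) :
    ∃ p, IsHomotopyInverse d p e π := by
  have hde : d * e = 0 := LinearMap.ext fun v =>
    (LinearMap.mem_ker (f := d)).1 (by rw [hker]; exact LinearMap.mem_range_self e v)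
  have hπd : π * d = 0 := LinearMap.ext fun v =>
    (LinearMap.mem_ker (f := π)).1 (by rw [← hrange]; exact LinearMap.mem_range_self d v)
  have hq : ∀ v, (1 - π) v ∈ LinearMap.range d := fun v => by
    rw [hrange, LinearMap.mem_ker, ← Module.End.mul_apply, mul_sub, mul_one, hπ, sub_self,
      LinearMap.zero_apply]
  obtain ⟨g, hg⟩ := d.rangeRestrict.exists_rightInverse_of_surjective d.range_rangeRestrict
  have hdg : ∀ y, d (g y) = y := fun y => congrArg Subtype.val (LinearMap.congr_fun hg y)
  have hde' : ∀ v, d (e v) = 0 := fun v => LinearMap.congr_fun hde v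
  refine ⟨(1 - e) ∘ₗ g ∘ₗ (1 - π).codRestrict _ hq, ⟨?_, ?_, hde, hπd⟩⟩
  · ext v
    simp [hdg, hde']
  · ext v
    -- `g (d v)` and `v` have the same image under `d`, so they differ by an element of `range e`
    obtain ⟨w, hw⟩ : g ((1 - π).codRestrict _ hq (d v)) - v ∈ LinearMap.range e := by
      rw [← hker, LinearMap.mem_ker, map_sub, hdg]
      simp [← Module.End.mul_apply, hπd]
    have : (1 - e) (e w) = 0 := by
      rw [← Module.End.mul_apply, sub_mul, one_mul, he, sub_self, LinearMap.zero_apply]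
    rw [hw, map_sub, sub_eq_zero] at this
    simpa using this

theorem range_eq_ker_of_le_of_finrank_eq [FiniteDimensional K V] {d π : Module.End K V}
    (hle : LinearMap.range d ≤ LinearMap.ker π)
    (h : Module.finrank K (LinearMap.ker d) = Module.finrank K (LinearMap.range π)) :
    LinearMap.range d = LinearMap.ker π := by
  refine Submodule.eq_of_le_of_finrank_eq hle ?_
  have hd := LinearMap.finrank_range_add_finrank_ker d
  have hπ := LinearMap.finrank_range_add_finrank_ker π
  omega

end DivisionRing

theorem span_triple_eq_prod {K M₁ M₂ M₃ : Type*} [Semiring K] [AddCommMonoid M₁] [Module K M₁]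
    [AddCommMonoid M₂] [Module K M₂] [AddCommMonoid M₃] [Module K M₃] (a : M₁) (b : M₂) (c : M₃) :
    Submodule.span K {(a, 0, 0), (0, b, 0), (0, 0, c)} = (K ∙ a).prod ((K ∙ b).prod (K ∙ c)) := by
  refine le_antisymm ?_ ?_
  · rw [Submodule.span_le]
    rintro _ (rfl | rfl | rfl) <;>
      simp [Submodule.mem_span_singleton_self]
  · rintro ⟨x, y, z⟩ ⟨hx, hy, hz⟩
    obtain ⟨r, rfl⟩ := Submodule.mem_span_singleton.1 hx
    obtain ⟨s, rfl⟩ := Submodule.mem_span_singleton.1 hy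
    obtain ⟨t, rfl⟩ := Submodule.mem_span_singleton.1 hz
    have : ((r • a, s • b, t • c) : M₁ × M₂ × M₃) =
        r • (a, 0, 0) + s • (0, b, 0) + t • (0, 0, c) := by simp
    rw [this]
    refine add_mem (add_mem ?_ ?_) ?_ <;>
      exact Submodule.smul_mem _ _ (Submodule.subset_span (by simp))

theorem finrank_submodule_prod {K M₁ M₂ : Type*} [DivisionRing K] [AddCommGroup M₁] [Module K M₁]
    [AddCommGroup M₂] [Module K M₂] [FiniteDimensional K M₁] [FiniteDimensional K M₂]
    (p : Submodule K M₁) (q : Submodule K M₂) :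
    Module.finrank K (p.prod q) = Module.finrank K p + Module.finrank K q := by
  rw [← Module.finrank_prod]
  exact LinearEquiv.finrank_eq
    { toFun x := (⟨x.1.1, x.2.1⟩, ⟨x.1.2, x.2.2⟩)
      invFun y := ⟨(y.1, y.2), y.1.2, y.2.2⟩
      map_add' _ _ := rfl
      map_smul' _ _ := rfl
      left_inv _ := rfl
      right_inv _ := rfl }

theorem Commute.apply_apply {K V : Type*} [Semiring K] [AddCommGroup V] [Module K V]
    {a b : Module.End K V} (h : Commute a b) (v : V) : a (b v) = b (a v) :=
  LinearMap.congr_fun h.eq v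

section GradCurl

variable {K V : Type*} [Semiring K] [AddCommGroup V] [Module K V]

def grad3 (d₁ d₂ d₃ : Module.End K V) : V →ₗ[K] V × V × V := d₁.prod (d₂.prod d₃)

def curl3 (d₁ d₂ d₃ : Module.End K V) : V × V × V →ₗ[K] V × V × V :=
  LinearMap.prod
    (d₂ ∘ₗ LinearMap.snd K V V ∘ₗ LinearMap.snd K V (V × V) -
      d₃ ∘ₗ LinearMap.fst K V V ∘ₗ LinearMap.snd K V (V × V))
    (LinearMap.prod
      (d₃ ∘ₗ LinearMap.fst K V (V × V) - d₁ ∘ₗ LinearMap.snd K V V ∘ₗ LinearMap.snd K V (V × V))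
      (d₁ ∘ₗ LinearMap.fst K V V ∘ₗ LinearMap.snd K V (V × V) - d₂ ∘ₗ LinearMap.fst K V (V × V)))

@[simp] theorem grad3_apply (d₁ d₂ d₃ : Module.End K V) (φ : V) :
    grad3 d₁ d₂ d₃ φ = (d₁ φ, d₂ φ, d₃ φ) := rfl

theorem mem_ker_curl3 {d₁ d₂ d₃ : Module.End K V} {u₁ u₂ u₃ : V} :
    (u₁, u₂, u₃) ∈ LinearMap.ker (curl3 d₁ d₂ d₃) ↔
      d₂ u₃ = d₃ u₂ ∧ d₃ u₁ = d₁ u₃ ∧ d₁ u₂ = d₂ u₁ := by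
  simp [curl3, sub_eq_zero]

def potential3 (p₁ e₁ p₂ e₂ p₃ : Module.End K V) (u : V × V × V) : V :=
  p₁ u.1 + e₁ (p₂ u.2.1) + e₁ (e₂ (p₃ u.2.2))

-- `fₛ` embeds the operators acting along the `s`-th direction.
variable {R₁ R₂ R₃ : Type*} [Ring R₁] [Ring R₂] [Ring R₃]
  {f₁ : R₁ →+* Module.End K V} {f₂ : R₂ →+* Module.End K V} {f₃ : R₃ →+* Module.End K V}
  (h₁₂ : ∀ x y, Commute (f₁ x) (f₂ y)) (h₁₃ : ∀ x y, Commute (f₁ x) (f₃ y))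
  (h₂₃ : ∀ x y, Commute (f₂ x) (f₃ y))
  {d₁ p₁ e₁ π₁ : R₁} {d₂ p₂ e₂ π₂ : R₂} {d₃ p₃ e₃ π₃ : R₃}
  (H₁ : IsHomotopyInverse (f₁ d₁) (f₁ p₁) (f₁ e₁) (f₁ π₁))
  (H₂ : IsHomotopyInverse (f₂ d₂) (f₂ p₂) (f₂ e₂) (f₂ π₂))
  (H₃ : IsHomotopyInverse (f₃ d₃) (f₃ p₃) (f₃ e₃) (f₃ π₃))

include h₁₂ h₁₃ H₁ H₂ H₃ in
theorem sub_d₁_potential3 {u₁ u₂ u₃ : V}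
    (hu : (u₁, u₂, u₃) ∈ LinearMap.ker (curl3 (f₁ d₁) (f₂ d₂) (f₃ d₃))) :
    u₁ - f₁ d₁ (potential3 (f₁ p₁) (f₁ e₁) (f₂ p₂) (f₂ e₂) (f₃ p₃) (u₁, u₂, u₃)) =
      (f₁ π₁ * f₂ e₂ * f₃ e₃) u₁ := by
  obtain ⟨-, h₃₁, h₁₂'⟩ := mem_ker_curl3.1 hu
  have hd₂ : f₂ d₂ (f₁ π₁ u₁) = 0 := by
    rw [← (h₁₂ _ _).apply_apply, ← h₁₂', H₁.apply_π_d]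
  have hd₃ : f₃ d₃ (f₁ π₁ u₁) = 0 := by
    rw [← (h₁₃ _ _).apply_apply, h₃₁, H₁.apply_π_d]
  simp only [potential3, map_add, H₁.apply_d_p, H₁.apply_d_e, add_zero, sub_sub_cancel,
    Module.End.mul_apply]
  rw [(h₁₂ _ _).apply_apply, (h₁₃ _ _).apply_apply, H₃.apply_e_of_d_eq_zero hd₃,
    H₂.apply_e_of_d_eq_zero hd₂]

include h₁₂ h₂₃ H₁ H₂ H₃ in
theorem sub_d₂_potential3 {u₁ u₂ u₃ : V}
    (hu : (u₁, u₂, u₃) ∈ LinearMap.ker (curl3 (f₁ d₁) (f₂ d₂) (f₃ d₃))) :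
    u₂ - f₂ d₂ (potential3 (f₁ p₁) (f₁ e₁) (f₂ p₂) (f₂ e₂) (f₃ p₃) (u₁, u₂, u₃)) =
      (f₁ e₁ * f₂ π₂ * f₃ e₃) u₂ := by
  obtain ⟨h₂₃', -, h₁₂'⟩ := mem_ker_curl3.1 hu
  have hd₃ : f₃ d₃ (f₂ π₂ u₂) = 0 := by
    rw [← (h₂₃ _ _).apply_apply, ← h₂₃', H₂.apply_π_d]
  simp only [potential3, map_add, Module.End.mul_apply]
  rw [← (h₁₂ p₁ d₂).apply_apply, ← h₁₂', H₁.apply_p_d, ← (h₁₂ e₁ d₂).apply_apply,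
    H₂.apply_d_p, ← (h₁₂ e₁ d₂).apply_apply, H₂.apply_d_e, map_zero, add_zero, map_sub,
    (h₂₃ π₂ e₃).apply_apply, H₃.apply_e_of_d_eq_zero hd₃]
  abel

include h₁₃ h₂₃ H₁ H₂ H₃ in
theorem sub_d₃_potential3 {u₁ u₂ u₃ : V}
    (hu : (u₁, u₂, u₃) ∈ LinearMap.ker (curl3 (f₁ d₁) (f₂ d₂) (f₃ d₃))) :
    u₃ - f₃ d₃ (potential3 (f₁ p₁) (f₁ e₁) (f₂ p₂) (f₂ e₂) (f₃ p₃) (u₁, u₂, u₃)) =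
      (f₁ e₁ * f₂ e₂ * f₃ π₃) u₃ := by
  obtain ⟨h₂₃', h₃₁, -⟩ := mem_ker_curl3.1 hu
  simp only [potential3, map_add, Module.End.mul_apply]
  rw [← (h₁₃ p₁ d₃).apply_apply, h₃₁, H₁.apply_p_d, ← (h₁₃ e₁ d₃).apply_apply,
    ← (h₂₃ p₂ d₃).apply_apply, ← h₂₃', H₂.apply_p_d, ← (h₁₃ e₁ d₃).apply_apply,
    ← (h₂₃ e₂ d₃).apply_apply, H₃.apply_d_p, map_sub, map_sub, map_sub]
  abel

include h₁₂ h₁₃ h₂₃ H₁ H₂ H₃ in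
theorem ker_curl3_eq_range_grad3_sup :
    LinearMap.ker (curl3 (f₁ d₁) (f₂ d₂) (f₃ d₃)) =
      LinearMap.range (grad3 (f₁ d₁) (f₂ d₂) (f₃ d₃)) ⊔
        (LinearMap.range (f₁ π₁ * f₂ e₂ * f₃ e₃)).prod
          ((LinearMap.range (f₁ e₁ * f₂ π₂ * f₃ e₃)).prod
            (LinearMap.range (f₁ e₁ * f₂ e₂ * f₃ π₃))) := by
  refine le_antisymm ?_ (sup_le ?_ ?_)
  · rintro ⟨u₁, u₂, u₃⟩ hu
    refine Submodule.mem_sup.2 ⟨_, LinearMap.mem_range_self _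
      (potential3 (f₁ p₁) (f₁ e₁) (f₂ p₂) (f₂ e₂) (f₃ p₃) (u₁, u₂, u₃)),
      ((f₁ π₁ * f₂ e₂ * f₃ e₃) u₁, (f₁ e₁ * f₂ π₂ * f₃ e₃) u₂, (f₁ e₁ * f₂ e₂ * f₃ π₃) u₃),
      ⟨LinearMap.mem_range_self _ u₁, LinearMap.mem_range_self _ u₂,
        LinearMap.mem_range_self _ u₃⟩, ?_⟩
    rw [← sub_d₁_potential3 h₁₂ h₁₃ H₁ H₂ H₃ hu, ← sub_d₂_potential3 h₁₂ h₂₃ H₁ H₂ H₃ hu,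
      ← sub_d₃_potential3 h₁₃ h₂₃ H₁ H₂ H₃ hu]
    simp
  · rintro - ⟨φ, rfl⟩
    exact mem_ker_curl3.2 ⟨(h₂₃ _ _).apply_apply φ, ((h₁₃ _ _).apply_apply φ).symm,
      (h₁₂ _ _).apply_apply φ⟩
  · rintro ⟨-, -, -⟩ ⟨⟨x, rfl⟩, ⟨y, rfl⟩, ⟨z, rfl⟩⟩
    simp only [mem_ker_curl3, Module.End.mul_apply]
    refine ⟨?_, ?_, ?_⟩
    · rw [← (h₁₂ e₁ d₂).apply_apply, H₂.apply_d_e, ← (h₁₃ e₁ d₃).apply_apply,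
        ← (h₂₃ π₂ d₃).apply_apply, H₃.apply_d_e, map_zero, map_zero, map_zero]
    · rw [← (h₁₃ π₁ d₃).apply_apply, ← (h₂₃ e₂ d₃).apply_apply, H₃.apply_d_e, H₁.apply_d_e,
        map_zero, map_zero]
    · rw [← (h₁₂ π₁ d₂).apply_apply, H₂.apply_d_e, H₁.apply_d_e, map_zero]

include h₁₂ h₁₃ h₂₃ H₁ H₂ H₃ in
theorem disjoint_range_grad3 :
    Disjoint (LinearMap.range (grad3 (f₁ d₁) (f₂ d₂) (f₃ d₃)))
      ((LinearMap.range (f₁ π₁ * f₂ e₂ * f₃ e₃)).prod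
        ((LinearMap.range (f₁ e₁ * f₂ π₂ * f₃ e₃)).prod
          (LinearMap.range (f₁ e₁ * f₂ e₂ * f₃ π₃)))) := by
  rw [Submodule.disjoint_def]
  rintro - ⟨φ, rfl⟩ ⟨⟨x, hx⟩, ⟨y, hy⟩, ⟨z, hz⟩⟩
  simp only [grad3_apply, Module.End.mul_apply] at hx hy hz
  have h₁ : f₁ d₁ φ = 0 := by
    rw [← H₁.apply_π_d φ, ← hx, H₁.apply_π_π]
  have h₂ : f₂ d₂ φ = 0 := by
    rw [← H₂.apply_π_d φ, ← hy, ← (h₁₂ e₁ π₂).apply_apply, H₂.apply_π_π]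
  have h₃ : f₃ d₃ φ = 0 := by
    rw [← H₃.apply_π_d φ, ← hz, ← (h₁₃ e₁ π₃).apply_apply, ← (h₂₃ e₂ π₃).apply_apply,
      H₃.apply_π_π]
  simp [h₁, h₂, h₃]

include h₁₂ h₁₃ h₂₃ H₁ H₂ H₃ in
theorem ker_grad3_eq_range :
    LinearMap.ker (grad3 (f₁ d₁) (f₂ d₂) (f₃ d₃)) = LinearMap.range (f₁ e₁ * f₂ e₂ * f₃ e₃) := by
  refine le_antisymm (fun φ hφ => ?_) ?_
  · simp only [LinearMap.mem_ker, grad3_apply, Prod.mk_eq_zero] at hφ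
    refine ⟨φ, ?_⟩
    rw [Module.End.mul_apply, Module.End.mul_apply, H₃.apply_e_of_d_eq_zero hφ.2.2,
      H₂.apply_e_of_d_eq_zero hφ.2.1, H₁.apply_e_of_d_eq_zero hφ.1]
  · rintro - ⟨ψ, rfl⟩
    simp only [LinearMap.mem_ker, grad3_apply, Prod.mk_eq_zero, Module.End.mul_apply]
    refine ⟨H₁.apply_d_e _, ?_, ?_⟩
    · rw [← (h₁₂ e₁ d₂).apply_apply, H₂.apply_d_e, map_zero]
    · rw [← (h₁₃ e₁ d₃).apply_apply, ← (h₂₃ e₂ d₃).apply_apply, H₃.apply_d_e, map_zero,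
        map_zero]

end GradCurl

section VecKron

variable {R : Type*} [CommSemiring R] {l m : Type*}

def vecKron (a : l → R) (b : m → R) : l × m → R := fun p => a p.1 * b p.2

theorem vecKron_zero_left (b : m → R) : vecKron (0 : l → R) b = 0 := by
  ext; simp [vecKron]

theorem vecKron_zero_right (a : l → R) : vecKron a (0 : m → R) = 0 := by
  ext; simp [vecKron]

theorem vecMulVec_kronecker_vecMulVec (a b : l → R) (c d : m → R) :
    vecMulVec a b ⊗ₖ vecMulVec c d = vecMulVec (vecKron a c) (vecKron b d) := by
  ext ⟨i, j⟩ ⟨i', j'⟩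
  simp only [kronecker_apply, vecMulVec_apply, vecKron]
  ring

theorem vecKron_ne_zero [NoZeroDivisors R] {a : l → R} {b : m → R} (ha : a ≠ 0) (hb : b ≠ 0) :
    vecKron a b ≠ 0 := by
  obtain ⟨i, hi⟩ := Function.ne_iff.1 ha
  obtain ⟨j, hj⟩ := Function.ne_iff.1 hb
  exact Function.ne_iff.2 ⟨(i, j), mul_ne_zero hi hj⟩

variable [Fintype l] [Fintype m]

theorem kronecker_mulVec_vecKron (A : Matrix l l R) (B : Matrix m m R) (a : l → R) (b : m → R) :
    (A ⊗ₖ B) *ᵥ vecKron a b = vecKron (A *ᵥ a) (B *ᵥ b) := by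
  ext ⟨i, j⟩
  simp only [mulVec, dotProduct, vecKron, kronecker_apply, Fintype.sum_prod_type,
    Finset.sum_mul_sum]
  exact Finset.sum_congr rfl fun _ _ => Finset.sum_congr rfl fun _ _ => by ring

theorem vecKron_dotProduct_vecKron (a c : l → R) (b d : m → R) :
    vecKron a b ⬝ᵥ vecKron c d = (a ⬝ᵥ c) * (b ⬝ᵥ d) := by
  simp only [dotProduct, vecKron, Fintype.sum_prod_type, Finset.sum_mul_sum]
  exact Finset.sum_congr rfl fun _ _ => Finset.sum_congr rfl fun _ _ => by ring

end VecKron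

section RankOne

variable {K n : Type*} [CommSemiring K] [Fintype n] {x y : n → K}

theorem vecMulVec_mul_self_of_dotProduct_eq_one (h : y ⬝ᵥ x = 1) :
    vecMulVec x y * vecMulVec x y = vecMulVec x y := by
  rw [vecMulVec_mul_vecMulVec, h, one_smul]

theorem range_mulVecLin_vecMulVec (h : y ⬝ᵥ x = 1) :
    LinearMap.range (vecMulVec x y).mulVecLin = K ∙ x := by
  refine le_antisymm ?_ ?_
  · rintro - ⟨v, rfl⟩
    rw [mulVecLin_apply, vecMulVec_mulVec, op_smul_eq_smul]
    exact Submodule.smul_mem _ _ (Submodule.mem_span_singleton_self x)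
  · rw [Submodule.span_singleton_le_iff_mem]
    exact ⟨x, by rw [mulVecLin_apply, vecMulVec_mulVec, op_smul_eq_smul, h, one_smul]⟩

end RankOne

/-- `M⁻¹ Dᵀ M` is the `M`-adjoint of `D`. -/
structure IsNullspaceConsistent {ι : Type*} [Fintype ι] [DecidableEq ι]
    (D M : Matrix ι ι ℝ) (osc : ι → ℝ) : Prop where
  posDef : M.PosDef
  ker_eq : LinearMap.ker D.mulVecLin = ℝ ∙ 1
  ker_adjoint_eq : LinearMap.ker (M⁻¹ * Dᵀ * M).mulVecLin = ℝ ∙ osc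

namespace IsNullspaceConsistent

variable {ι : Type*} [Fintype ι] [DecidableEq ι] {D M : Matrix ι ι ℝ} {osc : ι → ℝ}
  (h : IsNullspaceConsistent D M osc)
include h

theorem transpose_mulVec_mulVec_osc : Dᵀ *ᵥ (M *ᵥ osc) = 0 := by
  have h₀ := LinearMap.mem_ker.1 (h.ker_adjoint_eq ▸ Submodule.mem_span_singleton_self osc)
  rw [mulVecLin_apply] at h₀
  calc Dᵀ *ᵥ (M *ᵥ osc) = M *ᵥ ((M⁻¹ * Dᵀ * M) *ᵥ osc) := by
        rw [mulVec_mulVec, mulVec_mulVec, mul_assoc M⁻¹,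
          mul_nonsing_inv_cancel_left _ _ ((isUnit_iff_isUnit_det M).1 h.posDef.isUnit)]
    _ = 0 := by rw [h₀, mulVec_zero]

theorem osc_ne_zero [Nonempty ι] : osc ≠ 0 := by
  intro h₀
  have hD : D.det = 0 := exists_mulVec_eq_zero_iff.1
    ⟨1, one_ne_zero, LinearMap.mem_ker.1 (h.ker_eq ▸ Submodule.mem_span_singleton_self 1)⟩
  obtain ⟨v, hv₀, hv⟩ := exists_mulVec_eq_zero_iff.2 (show (M⁻¹ * Dᵀ * M).det = 0 by
    rw [det_mul, det_mul, det_transpose, hD, mul_zero, zero_mul])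
  have : v ∈ LinearMap.ker (M⁻¹ * Dᵀ * M).mulVecLin := hv
  rw [h.ker_adjoint_eq, h₀, Submodule.span_singleton_eq_bot.2 rfl, Submodule.mem_bot] at this
  exact hv₀ this

/-- `ρ` is `M osc` normalised, so that `vecMulVec osc ρ` is the `M`-orthogonal projection onto
`osc`. -/
theorem exists_isHomotopyInverse (i₀ : ι) :
    ∃ ρ P, ρ ⬝ᵥ osc = 1 ∧
      IsHomotopyInverse D P (vecMulVec 1 (Pi.single i₀ 1)) (vecMulVec osc ρ) := by
  have : Nonempty ι := ⟨i₀⟩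
  have hosc₀ := h.osc_ne_zero
  have hc : 0 < osc ⬝ᵥ (M *ᵥ osc) := by simpa using h.posDef.dotProduct_mulVec_pos hosc₀
  set ρ := (osc ⬝ᵥ (M *ᵥ osc))⁻¹ • (M *ᵥ osc) with hρ
  have hρosc : ρ ⬝ᵥ osc = 1 := by
    rw [hρ, smul_dotProduct, dotProduct_comm (M *ᵥ osc), smul_eq_mul, inv_mul_cancel₀ hc.ne']
  have hρD : ρ ᵥ* D = 0 := by
    rw [hρ, ← mulVec_transpose, mulVec_smul, h.transpose_mulVec_mulVec_osc, smul_zero]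
  have hE : Pi.single i₀ 1 ⬝ᵥ (1 : ι → ℝ) = 1 := by simp
  obtain ⟨p, hp⟩ := _root_.exists_isHomotopyInverse (d := toLinAlgEquiv' D)
    (e := toLinAlgEquiv' (vecMulVec 1 (Pi.single i₀ 1))) (π := toLinAlgEquiv' (vecMulVec osc ρ))
    (by rw [← map_mul, vecMulVec_mul_self_of_dotProduct_eq_one hE])
    (by rw [← map_mul, vecMulVec_mul_self_of_dotProduct_eq_one hρosc])
    (h.ker_eq.trans (range_mulVecLin_vecMulVec hE).symm)
    (range_eq_ker_of_le_of_finrank_eq (d := D.mulVecLin) (π := (vecMulVec osc ρ).mulVecLin)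
      (by
        rintro - ⟨v, rfl⟩
        rw [LinearMap.mem_ker, mulVecLin_apply, mulVecLin_apply, vecMulVec_mulVec,
          dotProduct_mulVec, hρD, zero_dotProduct, MulOpposite.op_zero, zero_smul])
      (by rw [h.ker_eq, range_mulVecLin_vecMulVec hρosc, finrank_span_singleton one_ne_zero,
        finrank_span_singleton hosc₀]))
  refine ⟨ρ, toLinAlgEquiv'.symm p, hρosc, ?_⟩
  simpa using hp.map toLinAlgEquiv'.symm.toRingHom

end IsNullspaceConsistent

section Axes

variable (K : Type*) [CommSemiring K] (ι₁ ι₂ ι₃ : Type*) [Fintype ι₁] [Fintype ι₂] [Fintype ι₃]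
  [DecidableEq ι₁] [DecidableEq ι₂] [DecidableEq ι₃]

def axis₁ : Matrix ι₁ ι₁ K →+* Module.End K (ι₁ × ι₂ × ι₃ → K) where
  toFun A := toLinAlgEquiv' (A ⊗ₖ ((1 : Matrix ι₂ ι₂ K) ⊗ₖ (1 : Matrix ι₃ ι₃ K)))
  map_one' := by rw [one_kronecker_one, one_kronecker_one, map_one]
  map_mul' A B := by rw [← map_mul, ← mul_kronecker_mul, ← mul_kronecker_mul, mul_one, mul_one]
  map_zero' := by rw [zero_kronecker, map_zero]
  map_add' A B := by rw [add_kronecker, map_add]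

def axis₂ : Matrix ι₂ ι₂ K →+* Module.End K (ι₁ × ι₂ × ι₃ → K) where
  toFun B := toLinAlgEquiv' ((1 : Matrix ι₁ ι₁ K) ⊗ₖ (B ⊗ₖ (1 : Matrix ι₃ ι₃ K)))
  map_one' := by rw [one_kronecker_one, one_kronecker_one, map_one]
  map_mul' A B := by rw [← map_mul, ← mul_kronecker_mul, ← mul_kronecker_mul, mul_one, mul_one]
  map_zero' := by rw [zero_kronecker, kronecker_zero, map_zero]
  map_add' A B := by rw [add_kronecker, kronecker_add, map_add]

def axis₃ : Matrix ι₃ ι₃ K →+* Module.End K (ι₁ × ι₂ × ι₃ → K) where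
  toFun C := toLinAlgEquiv' ((1 : Matrix ι₁ ι₁ K) ⊗ₖ ((1 : Matrix ι₂ ι₂ K) ⊗ₖ C))
  map_one' := by rw [one_kronecker_one, one_kronecker_one, map_one]
  map_mul' A B := by rw [← map_mul, ← mul_kronecker_mul, ← mul_kronecker_mul, mul_one, mul_one]
  map_zero' := by rw [kronecker_zero, kronecker_zero, map_zero]
  map_add' A B := by rw [kronecker_add, kronecker_add, map_add]

variable {K ι₁ ι₂ ι₃}

theorem commute_axis₁_axis₂ (A : Matrix ι₁ ι₁ K) (B : Matrix ι₂ ι₂ K) :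
    Commute (axis₁ K ι₁ ι₂ ι₃ A) (axis₂ K ι₁ ι₂ ι₃ B) := by
  simp only [Commute, SemiconjBy, axis₁, axis₂, RingHom.coe_mk, MonoidHom.coe_mk, OneHom.coe_mk,
    ← map_mul, ← mul_kronecker_mul, mul_one, one_mul]

theorem commute_axis₁_axis₃ (A : Matrix ι₁ ι₁ K) (C : Matrix ι₃ ι₃ K) :
    Commute (axis₁ K ι₁ ι₂ ι₃ A) (axis₃ K ι₁ ι₂ ι₃ C) := by
  simp only [Commute, SemiconjBy, axis₁, axis₃, RingHom.coe_mk, MonoidHom.coe_mk, OneHom.coe_mk,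
    ← map_mul, ← mul_kronecker_mul, mul_one, one_mul]

theorem commute_axis₂_axis₃ (B : Matrix ι₂ ι₂ K) (C : Matrix ι₃ ι₃ K) :
    Commute (axis₂ K ι₁ ι₂ ι₃ B) (axis₃ K ι₁ ι₂ ι₃ C) := by
  simp only [Commute, SemiconjBy, axis₂, axis₃, RingHom.coe_mk, MonoidHom.coe_mk, OneHom.coe_mk,
    ← map_mul, ← mul_kronecker_mul, mul_one, one_mul]

theorem axis₁_mul_axis₂_mul_axis₃ (A : Matrix ι₁ ι₁ K) (B : Matrix ι₂ ι₂ K) (C : Matrix ι₃ ι₃ K) :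
    axis₁ K ι₁ ι₂ ι₃ A * axis₂ K ι₁ ι₂ ι₃ B * axis₃ K ι₁ ι₂ ι₃ C =
      toLinAlgEquiv' (A ⊗ₖ (B ⊗ₖ C)) := by
  simp only [axis₁, axis₂, axis₃, RingHom.coe_mk, MonoidHom.coe_mk, OneHom.coe_mk,
    ← map_mul, ← mul_kronecker_mul, mul_one, one_mul]

end Axes

theorem range_axis_mul_vecMulVec {K ι₁ ι₂ ι₃ : Type*} [CommSemiring K] [Fintype ι₁] [Fintype ι₂]
    [Fintype ι₃] [DecidableEq ι₁] [DecidableEq ι₂] [DecidableEq ι₃] {x x' : ι₁ → K}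
    {y y' : ι₂ → K} {z z' : ι₃ → K} (hx : x' ⬝ᵥ x = 1) (hy : y' ⬝ᵥ y = 1) (hz : z' ⬝ᵥ z = 1) :
    LinearMap.range (axis₁ K ι₁ ι₂ ι₃ (vecMulVec x x') * axis₂ K ι₁ ι₂ ι₃ (vecMulVec y y') *
      axis₃ K ι₁ ι₂ ι₃ (vecMulVec z z')) = K ∙ vecKron x (vecKron y z) := by
  rw [axis₁_mul_axis₂_mul_axis₃, vecMulVec_kronecker_vecMulVec, vecMulVec_kronecker_vecMulVec]
  exact range_mulVecLin_vecMulVec (by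
    rw [vecKron_dotProduct_vecKron, vecKron_dotProduct_vecKron, hx, hy, hz, one_mul, one_mul])

section TensorSBP

variable {ι₁ ι₂ ι₃ : Type*} [Fintype ι₁] [Fintype ι₂] [Fintype ι₃] [DecidableEq ι₁]
  [DecidableEq ι₂] [DecidableEq ι₃]

def oscSpan3 (oscx : ι₁ → ℝ) (oscy : ι₂ → ℝ) (oscz : ι₃ → ℝ) :
    Submodule ℝ ((ι₁ × ι₂ × ι₃ → ℝ) × (ι₁ × ι₂ × ι₃ → ℝ) × (ι₁ × ι₂ × ι₃ → ℝ)) :=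
  (ℝ ∙ vecKron oscx (vecKron 1 1)).prod
    ((ℝ ∙ vecKron 1 (vecKron oscy 1)).prod (ℝ ∙ vecKron 1 (vecKron 1 oscz)))

variable {Dx Mx : Matrix ι₁ ι₁ ℝ} {Dy My : Matrix ι₂ ι₂ ℝ} {Dz Mz : Matrix ι₃ ι₃ ℝ}
  {oscx : ι₁ → ℝ} {oscy : ι₂ → ℝ} {oscz : ι₃ → ℝ}
  (hx : IsNullspaceConsistent Dx Mx oscx) (hy : IsNullspaceConsistent Dy My oscy)
  (hz : IsNullspaceConsistent Dz Mz oscz)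
include hx hy hz

theorem IsNullspaceConsistent.ker_curl3_decomposition [Nonempty ι₁] [Nonempty ι₂]
    [Nonempty ι₃] :
    LinearMap.ker (curl3 (axis₁ ℝ ι₁ ι₂ ι₃ Dx) (axis₂ ℝ ι₁ ι₂ ι₃ Dy) (axis₃ ℝ ι₁ ι₂ ι₃ Dz)) =
        LinearMap.range (grad3 (axis₁ ℝ ι₁ ι₂ ι₃ Dx) (axis₂ ℝ ι₁ ι₂ ι₃ Dy)
          (axis₃ ℝ ι₁ ι₂ ι₃ Dz)) ⊔ oscSpan3 oscx oscy oscz ∧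
      Disjoint (LinearMap.range (grad3 (axis₁ ℝ ι₁ ι₂ ι₃ Dx) (axis₂ ℝ ι₁ ι₂ ι₃ Dy)
          (axis₃ ℝ ι₁ ι₂ ι₃ Dz))) (oscSpan3 oscx oscy oscz) ∧
      Module.finrank ℝ (LinearMap.ker (grad3 (axis₁ ℝ ι₁ ι₂ ι₃ Dx) (axis₂ ℝ ι₁ ι₂ ι₃ Dy)
          (axis₃ ℝ ι₁ ι₂ ι₃ Dz))) = 1 := by
  let i₀ := Classical.arbitrary ι₁
  let j₀ := Classical.arbitrary ι₂
  let k₀ := Classical.arbitrary ι₃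
  obtain ⟨ρx, Px, hρx, Hx⟩ := hx.exists_isHomotopyInverse i₀
  obtain ⟨ρy, Py, hρy, Hy⟩ := hy.exists_isHomotopyInverse j₀
  obtain ⟨ρz, Pz, hρz, Hz⟩ := hz.exists_isHomotopyInverse k₀
  have hEx : Pi.single i₀ 1 ⬝ᵥ (1 : ι₁ → ℝ) = 1 := by simp
  have hEy : Pi.single j₀ 1 ⬝ᵥ (1 : ι₂ → ℝ) = 1 := by simp
  have hEz : Pi.single k₀ 1 ⬝ᵥ (1 : ι₃ → ℝ) = 1 := by simp
  have H₁ := Hx.map (axis₁ ℝ ι₁ ι₂ ι₃)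
  have H₂ := Hy.map (axis₂ ℝ ι₁ ι₂ ι₃)
  have H₃ := Hz.map (axis₃ ℝ ι₁ ι₂ ι₃)
  have c₁₂ := commute_axis₁_axis₂ (K := ℝ) (ι₁ := ι₁) (ι₂ := ι₂) (ι₃ := ι₃)
  have c₁₃ := commute_axis₁_axis₃ (K := ℝ) (ι₁ := ι₁) (ι₂ := ι₂) (ι₃ := ι₃)
  have c₂₃ := commute_axis₂_axis₃ (K := ℝ) (ι₁ := ι₁) (ι₂ := ι₂) (ι₃ := ι₃)
  rw [oscSpan3, ← range_axis_mul_vecMulVec hρx hEy hEz, ← range_axis_mul_vecMulVec hEx hρy hEz,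
    ← range_axis_mul_vecMulVec hEx hEy hρz]
  refine ⟨ker_curl3_eq_range_grad3_sup c₁₂ c₁₃ c₂₃ H₁ H₂ H₃,
    disjoint_range_grad3 c₁₂ c₁₃ c₂₃ H₁ H₂ H₃, ?_⟩
  rw [ker_grad3_eq_range c₁₂ c₁₃ c₂₃ H₁ H₂ H₃, range_axis_mul_vecMulVec hEx hEy hEz,
    finrank_span_singleton (vecKron_ne_zero one_ne_zero (vecKron_ne_zero one_ne_zero one_ne_zero))]

theorem IsNullspaceConsistent.orthogonal_range_grad3_oscSpan3 :
    ∀ u ∈ LinearMap.range (grad3 (axis₁ ℝ ι₁ ι₂ ι₃ Dx) (axis₂ ℝ ι₁ ι₂ ι₃ Dy)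
        (axis₃ ℝ ι₁ ι₂ ι₃ Dz)), ∀ w ∈ oscSpan3 oscx oscy oscz,
      u.1 ⬝ᵥ (Mx ⊗ₖ (My ⊗ₖ Mz)) *ᵥ w.1 + u.2.1 ⬝ᵥ (Mx ⊗ₖ (My ⊗ₖ Mz)) *ᵥ w.2.1 +
        u.2.2 ⬝ᵥ (Mx ⊗ₖ (My ⊗ₖ Mz)) *ᵥ w.2.2 = 0 := by
  rintro - ⟨φ, rfl⟩ ⟨w₁, w₂, w₃⟩ hw
  obtain ⟨h₁, h₂, h₃⟩ : _ ∧ _ ∧ _ := by simpa only [oscSpan3, Submodule.mem_prod] using hw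
  obtain ⟨a, rfl⟩ := Submodule.mem_span_singleton.1 h₁
  obtain ⟨b, rfl⟩ := Submodule.mem_span_singleton.1 h₂
  obtain ⟨c, rfl⟩ := Submodule.mem_span_singleton.1 h₃
  have h : ∀ (A : Matrix (ι₁ × ι₂ × ι₃) (ι₁ × ι₂ × ι₃) ℝ) w, Aᵀ *ᵥ w = 0 → (A *ᵥ φ) ⬝ᵥ w = 0 :=
    fun A w hA => by rw [dotProduct_comm, ← dotProduct_transpose_mulVec, hA, dotProduct_zero]
  simp only [grad3_apply, axis₁, axis₂, axis₃, RingHom.coe_mk, MonoidHom.coe_mk, OneHom.coe_mk,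
    toLinAlgEquiv'_apply]
  rw [h _ _ ?_, h _ _ ?_, h _ _ ?_, add_zero, add_zero] <;>
    simp only [mulVec_smul, ← kroneckerMap_transpose, transpose_one, kronecker_mulVec_vecKron,
      hx.transpose_mulVec_mulVec_osc, hy.transpose_mulVec_mulVec_osc,
      hz.transpose_mulVec_mulVec_osc, vecKron_zero_left, vecKron_zero_right, smul_zero]

theorem IsNullspaceConsistent.finrank_oscSpan3 [Nonempty ι₁] [Nonempty ι₂] [Nonempty ι₃] :
    Module.finrank ℝ (oscSpan3 oscx oscy oscz) = 3 := by
  rw [oscSpan3, finrank_submodule_prod, finrank_submodule_prod,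
    finrank_span_singleton (vecKron_ne_zero hx.osc_ne_zero
      (vecKron_ne_zero one_ne_zero one_ne_zero)),
    finrank_span_singleton (vecKron_ne_zero one_ne_zero
      (vecKron_ne_zero hy.osc_ne_zero one_ne_zero)),
    finrank_span_singleton (vecKron_ne_zero one_ne_zero
      (vecKron_ne_zero one_ne_zero hz.osc_ne_zero))]

end TensorSBP

theorem ker_curl_eq_im_grad_oplus_osc_3D_general (N₁ N₂ N₃ : ℕ)
    (hN₁ : 1 ≤ N₁) (hN₂ : 1 ≤ N₂) (hN₃ : 1 ≤ N₃)
    (Dx Mx : Matrix (Fin N₁) (Fin N₁) ℝ) (Dy My : Matrix (Fin N₂) (Fin N₂) ℝ)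
    (Dz Mz : Matrix (Fin N₃) (Fin N₃) ℝ)
    (hMx : Mx.PosDef) (hMy : My.PosDef)
    (hMz : Mz.PosDef)
    (hDx : LinearMap.ker Dx.mulVecLin = Submodule.span ℝ {(fun _ => 1 : Fin N₁ → ℝ)})
    (hDy : LinearMap.ker Dy.mulVecLin = Submodule.span ℝ {(fun _ => 1 : Fin N₂ → ℝ)})
    (hDz : LinearMap.ker Dz.mulVecLin = Submodule.span ℝ {(fun _ => 1 : Fin N₃ → ℝ)})
    (oscx : Fin N₁ → ℝ) (oscy : Fin N₂ → ℝ) (oscz : Fin N₃ → ℝ)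
    (hoscx : LinearMap.ker (Mx⁻¹ * Dxᵀ * Mx).mulVecLin = Submodule.span ℝ {oscx})
    (hoscy : LinearMap.ker (My⁻¹ * Dyᵀ * My).mulVecLin = Submodule.span ℝ {oscy})
    (hoscz : LinearMap.ker (Mz⁻¹ * Dzᵀ * Mz).mulVecLin = Submodule.span ℝ {oscz})
    (D₁ D₂ D₃ : Matrix (Fin N₁ × Fin N₂ × Fin N₃) (Fin N₁ × Fin N₂ × Fin N₃) ℝ)
    (hD₁ : D₁ = Dx ⊗ₖ ((1 : Matrix (Fin N₂) (Fin N₂) ℝ) ⊗ₖ (1 : Matrix (Fin N₃) (Fin N₃) ℝ)))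
    (hD₂ : D₂ = (1 : Matrix (Fin N₁) (Fin N₁) ℝ) ⊗ₖ (Dy ⊗ₖ (1 : Matrix (Fin N₃) (Fin N₃) ℝ)))
    (hD₃ : D₃ = (1 : Matrix (Fin N₁) (Fin N₁) ℝ) ⊗ₖ ((1 : Matrix (Fin N₂) (Fin N₂) ℝ) ⊗ₖ Dz))
    (M : Matrix (Fin N₁ × Fin N₂ × Fin N₃) (Fin N₁ × Fin N₂ × Fin N₃) ℝ)
    (hM : M = Mx ⊗ₖ (My ⊗ₖ Mz))
    (grad : GridFun3 N₁ N₂ N₃ →ₗ[ℝ] GridFun3 N₁ N₂ N₃ × GridFun3 N₁ N₂ N₃ × GridFun3 N₁ N₂ N₃)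
    (hgrad : grad = LinearMap.prod D₁.mulVecLin (LinearMap.prod D₂.mulVecLin D₃.mulVecLin))
    (P₁ P₂ P₃ : GridFun3 N₁ N₂ N₃ × GridFun3 N₁ N₂ N₃ × GridFun3 N₁ N₂ N₃ →ₗ[ℝ] GridFun3 N₁ N₂ N₃)
    (hP₁ : P₁ = LinearMap.fst ℝ _ _)
    (hP₂ : P₂ = LinearMap.fst ℝ _ _ ∘ₗ LinearMap.snd ℝ (GridFun3 N₁ N₂ N₃) _)
    (hP₃ : P₃ = LinearMap.snd ℝ (GridFun3 N₁ N₂ N₃) _ ∘ₗ LinearMap.snd ℝ (GridFun3 N₁ N₂ N₃) _)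
    (curl : GridFun3 N₁ N₂ N₃ × GridFun3 N₁ N₂ N₃ × GridFun3 N₁ N₂ N₃ →ₗ[ℝ]
      GridFun3 N₁ N₂ N₃ × GridFun3 N₁ N₂ N₃ × GridFun3 N₁ N₂ N₃)
    (hcurl : curl = LinearMap.prod
      (D₂.mulVecLin ∘ₗ P₃ - D₃.mulVecLin ∘ₗ P₂)
      (LinearMap.prod (D₃.mulVecLin ∘ₗ P₁ - D₁.mulVecLin ∘ₗ P₃)
        (D₁.mulVecLin ∘ₗ P₂ - D₂.mulVecLin ∘ₗ P₁)))
    (osc₁ osc₂ osc₃ : GridFun3 N₁ N₂ N₃)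
    (hosc₁ : osc₁ = fun p => oscx p.1)
    (hosc₂ : osc₂ = fun p => oscy p.2.1)
    (hosc₃ : osc₃ = fun p => oscz p.2.2)
    (O : Submodule ℝ (GridFun3 N₁ N₂ N₃ × GridFun3 N₁ N₂ N₃ × GridFun3 N₁ N₂ N₃))
    (hO : O = Submodule.span ℝ {(osc₁, 0, 0), (0, osc₂, 0), (0, 0, osc₃)}) :
    LinearMap.ker curl = LinearMap.range grad ⊔ O ∧
      Disjoint (LinearMap.range grad) O ∧
      (∀ u ∈ LinearMap.range grad, ∀ w ∈ O,
        u.1 ⬝ᵥ M.mulVec w.1 + u.2.1 ⬝ᵥ M.mulVec w.2.1 + u.2.2 ⬝ᵥ M.mulVec w.2.2 = 0) ∧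
      Module.finrank ℝ ↥(LinearMap.ker curl) = N₁ * N₂ * N₃ + 2 ∧
      Module.finrank ℝ ↥(LinearMap.range grad) = N₁ * N₂ * N₃ - 1 := by
  have : Nonempty (Fin N₁) := ⟨⟨0, hN₁⟩⟩
  have : Nonempty (Fin N₂) := ⟨⟨0, hN₂⟩⟩
  have : Nonempty (Fin N₃) := ⟨⟨0, hN₃⟩⟩
  have hx : IsNullspaceConsistent Dx Mx oscx := ⟨hMx, hDx, hoscx⟩
  have hy : IsNullspaceConsistent Dy My oscy := ⟨hMy, hDy, hoscy⟩
  have hz : IsNullspaceConsistent Dz Mz oscz := ⟨hMz, hDz, hoscz⟩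
  have hO' : O = oscSpan3 oscx oscy oscz := by
    rw [hO, span_triple_eq_prod, oscSpan3, hosc₁, hosc₂, hosc₃]
    congr <;> ext <;> simp [vecKron]
  have hrange := LinearMap.finrank_range_add_finrank_ker grad
  have hsup := Submodule.finrank_sup_add_finrank_inf_eq (LinearMap.range grad) O
  subst hD₁ hD₂ hD₃ hP₁ hP₂ hP₃ hO' hM
  -- `axisₛ ℝ _ _ _ A` unfolds to the `mulVecLin` of the Kronecker product with identities
  obtain rfl : grad = grad3 (axis₁ ℝ _ _ _ Dx) (axis₂ ℝ _ _ _ Dy) (axis₃ ℝ _ _ _ Dz) := hgrad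
  obtain rfl : curl = curl3 (axis₁ ℝ _ _ _ Dx) (axis₂ ℝ _ _ _ Dy) (axis₃ ℝ _ _ _ Dz) := hcurl
  obtain ⟨hker, hdisj, hkergrad⟩ := hx.ker_curl3_decomposition hy hz
  rw [hkergrad, Module.finrank_fintype_fun_eq_card, Fintype.card_prod, Fintype.card_prod,
    Fintype.card_fin, Fintype.card_fin, Fintype.card_fin, ← mul_assoc] at hrange
  rw [disjoint_iff.1 hdisj, finrank_bot, hx.finrank_oscSpan3 hy hz, ← hker] at hsup
  exact ⟨hker, hdisj, hx.orthogonal_range_grad3_oscSpan3 hy hz, by omega, by omega⟩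

/-- For nullspace consistent tensor product SBP operators in three dimensions, the kernel of
the discrete curl equals the `M`-orthogonal direct sum of the image of the discrete gradient
and the three-dimensional span of `(osc₁,0,0)`, `(0,osc₂,0)`, `(0,0,osc₃)`; in particular
`dim ker curl = N₁N₂N₃ + 2` and `dim im grad = N₁N₂N₃ - 1`. -/
theorem ker_curl_eq_im_grad_oplus_osc_3D (N₁ N₂ N₃ : ℕ)
    (hN₁ : 1 ≤ N₁) (hN₂ : 1 ≤ N₂) (hN₃ : 1 ≤ N₃)
    (Dx Mx : Matrix (Fin N₁) (Fin N₁) ℝ) (Dy My : Matrix (Fin N₂) (Fin N₂) ℝ)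
    (Dz Mz : Matrix (Fin N₃) (Fin N₃) ℝ)
    (hMx : Mx.PosDef) (hMxsym : Mx.IsSymm) (hMy : My.PosDef) (hMysym : My.IsSymm)
    (hMz : Mz.PosDef) (hMzsym : Mz.IsSymm)
    (hDx : LinearMap.ker Dx.mulVecLin = Submodule.span ℝ {(fun _ => 1 : Fin N₁ → ℝ)})
    (hDy : LinearMap.ker Dy.mulVecLin = Submodule.span ℝ {(fun _ => 1 : Fin N₂ → ℝ)})
    (hDz : LinearMap.ker Dz.mulVecLin = Submodule.span ℝ {(fun _ => 1 : Fin N₃ → ℝ)})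
    (oscx : Fin N₁ → ℝ) (oscy : Fin N₂ → ℝ) (oscz : Fin N₃ → ℝ)
    (hoscx : LinearMap.ker (Mx⁻¹ * Dxᵀ * Mx).mulVecLin = Submodule.span ℝ {oscx})
    (hoscy : LinearMap.ker (My⁻¹ * Dyᵀ * My).mulVecLin = Submodule.span ℝ {oscy})
    (hoscz : LinearMap.ker (Mz⁻¹ * Dzᵀ * Mz).mulVecLin = Submodule.span ℝ {oscz})
    (D₁ D₂ D₃ : Matrix (Fin N₁ × Fin N₂ × Fin N₃) (Fin N₁ × Fin N₂ × Fin N₃) ℝ)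
    (hD₁ : D₁ = Dx ⊗ₖ ((1 : Matrix (Fin N₂) (Fin N₂) ℝ) ⊗ₖ (1 : Matrix (Fin N₃) (Fin N₃) ℝ)))
    (hD₂ : D₂ = (1 : Matrix (Fin N₁) (Fin N₁) ℝ) ⊗ₖ (Dy ⊗ₖ (1 : Matrix (Fin N₃) (Fin N₃) ℝ)))
    (hD₃ : D₃ = (1 : Matrix (Fin N₁) (Fin N₁) ℝ) ⊗ₖ ((1 : Matrix (Fin N₂) (Fin N₂) ℝ) ⊗ₖ Dz))
    (M : Matrix (Fin N₁ × Fin N₂ × Fin N₃) (Fin N₁ × Fin N₂ × Fin N₃) ℝ)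
    (hM : M = Mx ⊗ₖ (My ⊗ₖ Mz))
    (grad : GridFun3 N₁ N₂ N₃ →ₗ[ℝ] GridFun3 N₁ N₂ N₃ × GridFun3 N₁ N₂ N₃ × GridFun3 N₁ N₂ N₃)
    (hgrad : grad = LinearMap.prod D₁.mulVecLin (LinearMap.prod D₂.mulVecLin D₃.mulVecLin))
    (P₁ P₂ P₃ : GridFun3 N₁ N₂ N₃ × GridFun3 N₁ N₂ N₃ × GridFun3 N₁ N₂ N₃ →ₗ[ℝ] GridFun3 N₁ N₂ N₃)
    (hP₁ : P₁ = LinearMap.fst ℝ _ _)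
    (hP₂ : P₂ = LinearMap.fst ℝ _ _ ∘ₗ LinearMap.snd ℝ (GridFun3 N₁ N₂ N₃) _)
    (hP₃ : P₃ = LinearMap.snd ℝ (GridFun3 N₁ N₂ N₃) _ ∘ₗ LinearMap.snd ℝ (GridFun3 N₁ N₂ N₃) _)
    (curl : GridFun3 N₁ N₂ N₃ × GridFun3 N₁ N₂ N₃ × GridFun3 N₁ N₂ N₃ →ₗ[ℝ]
      GridFun3 N₁ N₂ N₃ × GridFun3 N₁ N₂ N₃ × GridFun3 N₁ N₂ N₃)
    (hcurl : curl = LinearMap.prod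
      (D₂.mulVecLin ∘ₗ P₃ - D₃.mulVecLin ∘ₗ P₂)
      (LinearMap.prod (D₃.mulVecLin ∘ₗ P₁ - D₁.mulVecLin ∘ₗ P₃)
        (D₁.mulVecLin ∘ₗ P₂ - D₂.mulVecLin ∘ₗ P₁)))
    (osc₁ osc₂ osc₃ : GridFun3 N₁ N₂ N₃)
    (hosc₁ : osc₁ = fun p => oscx p.1)
    (hosc₂ : osc₂ = fun p => oscy p.2.1)
    (hosc₃ : osc₃ = fun p => oscz p.2.2)
    (O : Submodule ℝ (GridFun3 N₁ N₂ N₃ × GridFun3 N₁ N₂ N₃ × GridFun3 N₁ N₂ N₃))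
    (hO : O = Submodule.span ℝ {(osc₁, 0, 0), (0, osc₂, 0), (0, 0, osc₃)}) :
    LinearMap.ker curl = LinearMap.range grad ⊔ O ∧
      Disjoint (LinearMap.range grad) O ∧
      (∀ u ∈ LinearMap.range grad, ∀ w ∈ O,
        u.1 ⬝ᵥ M.mulVec w.1 + u.2.1 ⬝ᵥ M.mulVec w.2.1 + u.2.2 ⬝ᵥ M.mulVec w.2.2 = 0) ∧
      Module.finrank ℝ ↥(LinearMap.ker curl) = N₁ * N₂ * N₃ + 2 ∧
      Module.finrank ℝ ↥(LinearMap.range grad) = N₁ * N₂ * N₃ - 1 :=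
  ker_curl_eq_im_grad_oplus_osc_3D_general N₁ N₂ N₃ hN₁ hN₂ hN₃ Dx Mx Dy My Dz Mz hMx hMy hMz hDx
    hDy hDz oscx oscy oscz hoscx hoscy hoscz D₁ D₂ D₃ hD₁ hD₂ hD₃ M hM grad hgrad P₁ P₂ P₃ hP₁ hP₂
    hP₃ curl hcurl osc₁ osc₂ osc₃ hosc₁ hosc₂ hosc₃ O hO
end

section
/- For nullspace consistent tensor product SBP operators in two dimensions, the vectors (osc₁₂, 0) and (0, osc₁₂), with osc₁₂ = osc_x⊗osc_y, are M-orthogonal to both im grad and im rot; hence im grad + im rot ≠ ℝ^{N₁N₂} × ℝ^{N₁N₂}, so a discrete Helmholtz decomposition u = grad φ + rot v is impossible in general. -/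
/-!
Both components of a vector of `im grad + im rot` lie in `im D₁ + im D₂`. The vector
`M osc₁₂ = (Mx oscx) ⊗ (My oscy)` is annihilated by `D₁ᵀ = Dxᵀ ⊗ I` and `D₂ᵀ = I ⊗ Dyᵀ`, because
`Dxᵀ Mx oscx = 0` and `Dyᵀ My oscy = 0`; hence `(osc₁₂, 0)` is `M`-orthogonal to
`im grad + im rot`. It is not `M`-orthogonal to itself: `Dx` and `Dy` are singular, so are their
adjoints `Mx⁻¹ Dxᵀ Mx` and `My⁻¹ Dyᵀ My`, hence `oscx, oscy ≠ 0` and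
`⟨osc₁₂, M osc₁₂⟩ = ⟨oscx, Mx oscx⟩ ⟨oscy, My oscy⟩ > 0`.
-/

open Matrix Kronecker

namespace Matrix

section PureTensor

variable {R l m n p : Type*} [CommSemiring R] [Fintype m] [Fintype p]

theorem kronecker_mulVec_pureTensor (A : Matrix l m R) (B : Matrix n p R) (f : m → R)
    (g : p → R) :
    (A ⊗ₖ B) *ᵥ (fun x => f x.1 * g x.2) = fun x => (A *ᵥ f) x.1 * (B *ᵥ g) x.2 := by
  funext x
  simp only [mulVec, dotProduct, kroneckerMap_apply, Fintype.sum_prod_type, Finset.sum_mul_sum]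
  exact Finset.sum_congr rfl fun j _ => Finset.sum_congr rfl fun k _ => by ring

theorem pureTensor_vecMul_kronecker (A : Matrix m l R) (B : Matrix p n R) (f : m → R)
    (g : p → R) :
    (fun x => f x.1 * g x.2) ᵥ* (A ⊗ₖ B) = fun x => (f ᵥ* A) x.1 * (g ᵥ* B) x.2 := by
  simp only [← mulVec_transpose, ← kroneckerMap_transpose, kronecker_mulVec_pureTensor]

theorem pureTensor_dotProduct_pureTensor (f f' : m → R) (g g' : p → R) :
    (fun x : m × p => f x.1 * g x.2) ⬝ᵥ (fun x => f' x.1 * g' x.2) = (f ⬝ᵥ f') * (g ⬝ᵥ g') := by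
  simp only [dotProduct, Fintype.sum_prod_type, Finset.sum_mul_sum]
  exact Finset.sum_congr rfl fun j _ => Finset.sum_congr rfl fun k _ => by ring

end PureTensor

variable {R n : Type*} [Fintype n]

theorem vecMul_eq_zero_of_mem_ker_conj_transpose [CommRing R] [DecidableEq n]
    {D M : Matrix n n R} (hM : IsUnit M.det) {v : n → R}
    (hv : v ∈ LinearMap.ker (M⁻¹ * Dᵀ * M).mulVecLin) :
    (M *ᵥ v) ᵥ* D = 0 := by
  have hv : M⁻¹ *ᵥ (Dᵀ *ᵥ (M *ᵥ v)) = 0 := by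
    simpa only [LinearMap.mem_ker, mulVecLin_apply, ← mulVec_mulVec] using hv
  rw [← mulVec_transpose, ← one_mulVec (Dᵀ *ᵥ _), ← mul_nonsing_inv _ hM, ← mulVec_mulVec, hv,
    mulVec_zero]

theorem ne_zero_of_ker_conj_transpose_eq_span_s17 [DecidableEq n] [Field R] {D M : Matrix n n R}
    (hD : D.det = 0) {v : n → R}
    (hv : LinearMap.ker (M⁻¹ * Dᵀ * M).mulVecLin = Submodule.span R {v}) :
    v ≠ 0 := by
  rintro rfl
  obtain ⟨w, hw, hker⟩ := exists_mulVec_eq_zero_iff.mpr (by simp [hD] : (M⁻¹ * Dᵀ * M).det = 0)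
  have hw_mem : w ∈ LinearMap.ker (M⁻¹ * Dᵀ * M).mulVecLin := hker
  rw [hv, Submodule.span_zero_singleton, Submodule.mem_bot] at hw_mem
  exact hw hw_mem

theorem dotProduct_eq_zero_of_mem_range_grad_sup_range_rot [CommRing R] {D₁ D₂ : Matrix n n R}
    {w : n → R} (h₁ : w ᵥ* D₁ = 0) (h₂ : w ᵥ* D₂ = 0) {u : (n → R) × (n → R)}
    (hu : u ∈ LinearMap.range (D₁.mulVecLin.prod D₂.mulVecLin) ⊔
      LinearMap.range (D₂.mulVecLin.prod (-D₁.mulVecLin))) :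
    u.1 ⬝ᵥ w = 0 ∧ u.2 ⬝ᵥ w = 0 := by
  have orth : ∀ {D : Matrix n n R}, w ᵥ* D = 0 → ∀ φ, D *ᵥ φ ⬝ᵥ w = 0 := fun hD φ => by
    rw [dotProduct_comm, dotProduct_mulVec, hD, zero_dotProduct]
  obtain ⟨_, ⟨φ, rfl⟩, _, ⟨ψ, rfl⟩, rfl⟩ := Submodule.mem_sup.mp hu
  simp [add_dotProduct, orth h₁, orth h₂]

end Matrix

theorem discrete_helmholtz_impossible_2D_general (N₁ N₂ : ℕ) (hN₁ : 1 ≤ N₁) (hN₂ : 1 ≤ N₂)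
    (Dx Mx : Matrix (Fin N₁) (Fin N₁) ℝ) (Dy My : Matrix (Fin N₂) (Fin N₂) ℝ)
    (hMx : Mx.PosDef) (hMy : My.PosDef)
    (hDx : LinearMap.ker Dx.mulVecLin = Submodule.span ℝ {(fun _ => 1 : Fin N₁ → ℝ)})
    (hDy : LinearMap.ker Dy.mulVecLin = Submodule.span ℝ {(fun _ => 1 : Fin N₂ → ℝ)})
    (oscx : Fin N₁ → ℝ) (oscy : Fin N₂ → ℝ)
    (hoscx : LinearMap.ker (Mx⁻¹ * Dxᵀ * Mx).mulVecLin = Submodule.span ℝ {oscx})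
    (hoscy : LinearMap.ker (My⁻¹ * Dyᵀ * My).mulVecLin = Submodule.span ℝ {oscy})
    (D₁ D₂ : Matrix (Fin N₁ × Fin N₂) (Fin N₁ × Fin N₂) ℝ)
    (hD₁ : D₁ = Dx ⊗ₖ (1 : Matrix (Fin N₂) (Fin N₂) ℝ))
    (hD₂ : D₂ = (1 : Matrix (Fin N₁) (Fin N₁) ℝ) ⊗ₖ Dy)
    (grad : (Fin N₁ × Fin N₂ → ℝ) →ₗ[ℝ] (Fin N₁ × Fin N₂ → ℝ) × (Fin N₁ × Fin N₂ → ℝ))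
    (hgrad : grad = LinearMap.prod D₁.mulVecLin D₂.mulVecLin)
    (rot : (Fin N₁ × Fin N₂ → ℝ) →ₗ[ℝ] (Fin N₁ × Fin N₂ → ℝ) × (Fin N₁ × Fin N₂ → ℝ))
    (hrot : rot = LinearMap.prod D₂.mulVecLin (-D₁.mulVecLin))
    (osc₁₂ : Fin N₁ × Fin N₂ → ℝ) (hosc₁₂ : osc₁₂ = fun p => oscx p.1 * oscy p.2) :
    (∀ u ∈ LinearMap.range grad ⊔ LinearMap.range rot,
      u.1 ⬝ᵥ (Mx ⊗ₖ My).mulVec osc₁₂ = 0 ∧ u.2 ⬝ᵥ (Mx ⊗ₖ My).mulVec osc₁₂ = 0) ∧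
    ∃ u : (Fin N₁ × Fin N₂ → ℝ) × (Fin N₁ × Fin N₂ → ℝ),
      u ∉ LinearMap.range grad ⊔ LinearMap.range rot := by
  subst hD₁ hD₂ hgrad hrot
  have hMosc : (Mx ⊗ₖ My) *ᵥ osc₁₂ = fun p => (Mx *ᵥ oscx) p.1 * (My *ᵥ oscy) p.2 :=
    hosc₁₂ ▸ kronecker_mulVec_pureTensor ..
  have hx : (Mx *ᵥ oscx) ᵥ* Dx = 0 := vecMul_eq_zero_of_mem_ker_conj_transpose
    hMx.det_pos.ne'.isUnit (hoscx ▸ Submodule.mem_span_singleton_self oscx)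
  have hy : (My *ᵥ oscy) ᵥ* Dy = 0 := vecMul_eq_zero_of_mem_ker_conj_transpose
    hMy.det_pos.ne'.isUnit (hoscy ▸ Submodule.mem_span_singleton_self oscy)
  have h₁ : ((Mx ⊗ₖ My) *ᵥ osc₁₂) ᵥ* (Dx ⊗ₖ (1 : Matrix (Fin N₂) (Fin N₂) ℝ)) = 0 := by
    rw [hMosc, pureTensor_vecMul_kronecker, hx]
    ext p
    simp
  have h₂ : ((Mx ⊗ₖ My) *ᵥ osc₁₂) ᵥ* ((1 : Matrix (Fin N₁) (Fin N₁) ℝ) ⊗ₖ Dy) = 0 := by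
    rw [hMosc, pureTensor_vecMul_kronecker, hy]
    ext p
    simp
  refine ⟨fun u hu => dotProduct_eq_zero_of_mem_range_grad_sup_range_rot h₁ h₂ hu, (osc₁₂, 0),
    fun hu => ?_⟩
  have : Nonempty (Fin N₁) := Fin.pos_iff_nonempty.mp hN₁
  have : Nonempty (Fin N₂) := Fin.pos_iff_nonempty.mp hN₂
  have hDx_sing : Dx.det = 0 := exists_mulVec_eq_zero_iff.mp
    ⟨1, one_ne_zero, (hDx ▸ Submodule.mem_span_singleton_self _ : _ ∈ LinearMap.ker Dx.mulVecLin)⟩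
  have hDy_sing : Dy.det = 0 := exists_mulVec_eq_zero_iff.mp
    ⟨1, one_ne_zero, (hDy ▸ Submodule.mem_span_singleton_self _ : _ ∈ LinearMap.ker Dy.mulVecLin)⟩
  have hoscx_pos : 0 < oscx ⬝ᵥ (Mx *ᵥ oscx) :=
    hMx.dotProduct_mulVec_pos (ne_zero_of_ker_conj_transpose_eq_span_s17 hDx_sing hoscx)
  have hoscy_pos : 0 < oscy ⬝ᵥ (My *ᵥ oscy) :=
    hMy.dotProduct_mulVec_pos (ne_zero_of_ker_conj_transpose_eq_span_s17 hDy_sing hoscy)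
  have hself := (dotProduct_eq_zero_of_mem_range_grad_sup_range_rot h₁ h₂ hu).1
  rw [hMosc, hosc₁₂, pureTensor_dotProduct_pureTensor] at hself
  exact (mul_pos hoscx_pos hoscy_pos).ne' hself

/-- For nullspace consistent tensor product SBP operators in two dimensions, the vectors
`(osc₁₂, 0)` and `(0, osc₁₂)`, with `osc₁₂ = osc_x ⊗ osc_y`, are `M`-orthogonal to both
`im grad` and `im rot`; hence `im grad + im rot ≠ ℝ^{N₁N₂} × ℝ^{N₁N₂}`, so a discrete
Helmholtz decomposition `u = grad φ + rot v` is impossible in general. -/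
theorem discrete_helmholtz_impossible_2D (N₁ N₂ : ℕ) (hN₁ : 1 ≤ N₁) (hN₂ : 1 ≤ N₂)
    (Dx Mx : Matrix (Fin N₁) (Fin N₁) ℝ) (Dy My : Matrix (Fin N₂) (Fin N₂) ℝ)
    (hMx : Mx.PosDef) (hMxsym : Mx.IsSymm) (hMy : My.PosDef) (hMysym : My.IsSymm)
    (hDx : LinearMap.ker Dx.mulVecLin = Submodule.span ℝ {(fun _ => 1 : Fin N₁ → ℝ)})
    (hDy : LinearMap.ker Dy.mulVecLin = Submodule.span ℝ {(fun _ => 1 : Fin N₂ → ℝ)})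
    (oscx : Fin N₁ → ℝ) (oscy : Fin N₂ → ℝ)
    (hoscx : LinearMap.ker (Mx⁻¹ * Dxᵀ * Mx).mulVecLin = Submodule.span ℝ {oscx})
    (hoscy : LinearMap.ker (My⁻¹ * Dyᵀ * My).mulVecLin = Submodule.span ℝ {oscy})
    (D₁ D₂ : Matrix (Fin N₁ × Fin N₂) (Fin N₁ × Fin N₂) ℝ)
    (hD₁ : D₁ = Dx ⊗ₖ (1 : Matrix (Fin N₂) (Fin N₂) ℝ))
    (hD₂ : D₂ = (1 : Matrix (Fin N₁) (Fin N₁) ℝ) ⊗ₖ Dy)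
    (grad : (Fin N₁ × Fin N₂ → ℝ) →ₗ[ℝ] (Fin N₁ × Fin N₂ → ℝ) × (Fin N₁ × Fin N₂ → ℝ))
    (hgrad : grad = LinearMap.prod D₁.mulVecLin D₂.mulVecLin)
    (rot : (Fin N₁ × Fin N₂ → ℝ) →ₗ[ℝ] (Fin N₁ × Fin N₂ → ℝ) × (Fin N₁ × Fin N₂ → ℝ))
    (hrot : rot = LinearMap.prod D₂.mulVecLin (-D₁.mulVecLin))
    (osc₁₂ : Fin N₁ × Fin N₂ → ℝ) (hosc₁₂ : osc₁₂ = fun p => oscx p.1 * oscy p.2) :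
    (∀ u ∈ LinearMap.range grad ⊔ LinearMap.range rot,
      u.1 ⬝ᵥ (Mx ⊗ₖ My).mulVec osc₁₂ = 0 ∧ u.2 ⬝ᵥ (Mx ⊗ₖ My).mulVec osc₁₂ = 0) ∧
    ∃ u : (Fin N₁ × Fin N₂ → ℝ) × (Fin N₁ × Fin N₂ → ℝ),
      u ∉ LinearMap.range grad ⊔ LinearMap.range rot :=
  discrete_helmholtz_impossible_2D_general N₁ N₂ hN₁ hN₂ Dx Mx Dy My hMx hMy hDx hDy oscx oscy hoscx
    hoscy D₁ D₂ hD₁ hD₂ grad hgrad rot hrot osc₁₂ hosc₁₂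
end
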